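/- arXiv:2601.14763 — 4 statements merged into one kernel-verified Lean document; each statement's English description precedes it below -/
import Mathlib

section
/- Let N ≥ 1 and let Q ∈ ℝ^{N×N} be a nonzero symmetric positive semidefinite matrix, let λ_m > 0 be its smallest nonzero eigenvalue, and let Π : ℂ^N → ℂ^N be the orthogonal projection onto the kernel of Q (viewed in ℂ^N). Let K > 0, let B ≥ 0, let u : [0,∞) → ℂ^N be continuous with ‖u(t)‖ ≤ B for all t ≥ 0, and let y : [0,∞) → ℂ^N be differentiable with y'(t) = u(t) − K Q y(t) for all t ≥ 0. Then for all t ≥ 0: ‖y(t) − Πy(t)‖ ≤ e^{−Kλ_m t} ‖y(0) − Πy(0)‖ + B/(Kλ_m), where ‖·‖ is the Euclidean norm on ℂ^N. -/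
/-!
Write `z = y - Π y`. Since `Π` projects orthogonally onto `ker Q`, `Q z = Q y` and
`Re ⟪z, z'⟫ = Re ⟪z, u⟫ - K Re ⟪z, Q z⟫`; expanding `z ∈ (ker Q)ᗮ` in an eigenbasis of `Q` gives
`Re ⟪z, Q z⟫ ≥ λ_m ‖z‖²`. Hence the right Dini derivative of `‖z‖` is at most `B - K λ_m ‖z‖`
(also at the zeros of `z`, where `z' = (1 - Π) u`), and Grönwall's comparison principle for the
scalar function `‖z‖` yields the bound.
-/

open Finset

noncomputable section

/-- The Euclidean norm on `ℂ^N`. -/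
def eucNorm {N : ℕ} (v : Fin N → ℂ) : ℝ := Real.sqrt (∑ i, ‖v i‖ ^ 2)

/-- The standard Hermitian inner product on `ℂ^N`. -/
def herm {N : ℕ} (x y : Fin N → ℂ) : ℂ := ∑ i, (starRingEnd ℂ) (x i) * y i

end

open Set Real Module.End
open scoped RealInnerProductSpace

theorem norm_le_gronwallBound_of_inner_deriv_right_le {F : Type*} [NormedAddCommGroup F]
    [InnerProductSpace ℝ F] {f f' : ℝ → F} {δ K ε a b : ℝ}
    (hf : ContinuousOn f (Icc a b)) (hf' : ∀ x ∈ Ico a b, HasDerivWithinAt f (f' x) (Ici x) x)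
    (ha : ‖f a‖ ≤ δ) (bound : ∀ x ∈ Ico a b, ⟪f x, f' x⟫ ≤ K * ‖f x‖ ^ 2 + ε * ‖f x‖)
    (bound_zero : ∀ x ∈ Ico a b, f x = 0 → ‖f' x‖ ≤ ε) :
    ∀ x ∈ Icc a b, ‖f x‖ ≤ gronwallBound δ K ε (x - a) := by
  classical
  -- a right derivative of `‖f‖`
  let g' : ℝ → ℝ := fun x => if f x = 0 then ‖f' x‖ else ⟪f x, f' x⟫ / ‖f x‖
  refine le_gronwallBound_of_liminf_deriv_right_le (f' := g')
    (continuous_norm.comp_continuousOn hf) (fun x hx r hr => ?_) ha (fun x hx => ?_)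
  · by_cases hx0 : f x = 0
    · simp only [g', if_pos hx0] at hr
      exact (hf' x hx).liminf_right_slope_norm_le hr
    · simp only [g', if_neg hx0] at hr
      have hnorm : HasDerivWithinAt (fun y => ‖f y‖) (⟪f x, f' x⟫ / ‖f x‖) (Ici x) x := by
        have h := ((hf' x hx).norm_sq).sqrt (by positivity)
        simp only [Real.sqrt_sq (norm_nonneg _)] at h
        convert h using 1
        field_simp
      simpa [slope_def_field, div_eq_inv_mul] using hnorm.liminf_right_slope_le hr
  · by_cases hx0 : f x = 0
    · simpa [g', hx0] using bound_zero x hx hx0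
    · simp only [g', if_neg hx0]
      rw [div_le_iff₀ (norm_pos_iff.2 hx0)]
      nlinarith [bound x hx]

theorem gronwallBound_neg_le {δ k ε : ℝ} (hk : 0 < k) (hε : 0 ≤ ε) (x : ℝ) :
    gronwallBound δ (-k) ε x ≤ exp (-k * x) * δ + ε / k := by
  have : 0 ≤ ε / k * exp (-k * x) := by positivity
  rw [gronwallBound_of_K_ne_0 (neg_ne_zero.2 hk.ne'), div_neg]
  linarith

theorem LinearMap.IsSymmetric.mul_norm_sq_le_re_inner_apply_of_mem_orthogonal_ker
    {𝕜 E : Type*} [RCLike 𝕜] [NormedAddCommGroup E] [InnerProductSpace 𝕜 E]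
    [FiniteDimensional 𝕜 E] {T : E →ₗ[𝕜] E} (hT : T.IsSymmetric) {lam : ℝ}
    (hlam : ∀ μ : ℝ, μ ≠ 0 → HasEigenvalue T μ → lam ≤ μ) {x : E}
    (hx : x ∈ (LinearMap.ker T)ᗮ) :
    lam * ‖x‖ ^ 2 ≤ RCLike.re (inner 𝕜 x (T x)) := by
  set b := hT.eigenvectorBasis rfl
  set μ := hT.eigenvalues rfl
  have hexpand : inner 𝕜 x (T x) = ∑ i, ((μ i * ‖inner 𝕜 (b i) x‖ ^ 2 : ℝ) : 𝕜) := by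
    rw [← b.sum_inner_mul_inner x (T x)]
    refine Finset.sum_congr rfl fun i _ => ?_
    rw [← hT, hT.apply_eigenvectorBasis, inner_smul_left, RCLike.conj_ofReal, ← inner_conj_symm x,
      mul_left_comm, RCLike.conj_mul]
    push_cast
    ring
  rw [hexpand, map_sum, ← b.sum_sq_norm_inner_right x, Finset.mul_sum]
  refine Finset.sum_le_sum fun i _ => ?_
  rw [RCLike.ofReal_re]
  by_cases hμ : μ i = 0
  · have hker : b i ∈ LinearMap.ker T := by
      simp [LinearMap.mem_ker, hT.apply_eigenvectorBasis, b, μ, hμ]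
    simp [hμ, Submodule.inner_right_of_mem_orthogonal hker hx]
  · exact mul_le_mul_of_nonneg_right (hlam _ hμ (hT.hasEigenvalue_eigenvalues rfl i))
      (by positivity)

theorem norm_starProjection_orthogonal_ker_le_of_hasDerivAt
    {E : Type*} [NormedAddCommGroup E] [InnerProductSpace ℂ E]
    {T : E →ₗ[ℂ] E} [(LinearMap.ker T).HasOrthogonalProjection] {lam K B : ℝ}
    (hlam : 0 < lam) (hK : 0 < K)
    (hcoer : ∀ x ∈ (LinearMap.ker T)ᗮ, lam * ‖x‖ ^ 2 ≤ (inner ℂ x (T x)).re)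
    {u y : ℝ → E} (hu : ∀ t ≥ (0 : ℝ), ‖u t‖ ≤ B)
    (hy : ∀ t ≥ (0 : ℝ), HasDerivAt y (u t - K • T (y t)) t) (t : ℝ) (ht : 0 ≤ t) :
    ‖(LinearMap.ker T)ᗮ.starProjection (y t)‖ ≤
      exp (-(K * lam) * t) * ‖(LinearMap.ker T)ᗮ.starProjection (y 0)‖ + B / (K * lam) := by
  let : InnerProductSpace ℝ E := InnerProductSpace.complexToReal
  set P := (LinearMap.ker T)ᗮ.starProjection
  have hTP : ∀ v, T (P v) = T v := fun v => by
    rw [Submodule.starProjection_orthogonal_val, map_sub,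
      LinearMap.mem_ker.1 (Submodule.starProjection_apply_mem _ v), sub_zero]
  have hPinner : ∀ v w, inner ℂ (P v) (P w) = inner ℂ (P v) w := fun v w => by
    rw [← Submodule.inner_starProjection_left_eq_right, Submodule.starProjection_eq_self_iff.2
      (Submodule.starProjection_apply_mem _ _)]
  have hderiv : ∀ s ≥ (0 : ℝ), HasDerivAt (fun s => P (y s)) (P (u s - K • T (y s))) s :=
    fun s hs => (P.restrictScalars ℝ).hasFDerivAt.comp_hasDerivAt s (hy s hs)
  have hinner : ∀ s ≥ (0 : ℝ), ⟪P (y s), P (u s - K • T (y s))⟫ ≤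
      -(K * lam) * ‖P (y s)‖ ^ 2 + B * ‖P (y s)‖ := fun s hs => by
    have hu' : ⟪P (y s), u s⟫ ≤ ‖P (y s)‖ * B :=
      (real_inner_le_norm _ _).trans (mul_le_mul_of_nonneg_left (hu s hs) (norm_nonneg _))
    have hQ := hcoer _ (Submodule.starProjection_apply_mem _ (y s))
    have hsplit : ⟪P (y s), P (u s - K • T (y s))⟫ =
        ⟪P (y s), u s⟫ - K * (inner ℂ (P (y s)) (T (P (y s)))).re := by
      change (inner ℂ _ _).re = (inner ℂ _ _).re - _
      rw [hPinner, inner_sub_right, ← Complex.coe_smul, inner_smul_right, hTP, Complex.sub_re,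
        Complex.re_ofReal_mul]
    rw [hsplit]
    nlinarith
  have hzero : ∀ s ≥ (0 : ℝ), P (y s) = 0 → ‖P (u s - K • T (y s))‖ ≤ B := fun s hs h0 => by
    rw [← hTP, h0, map_zero, smul_zero, sub_zero]
    exact (Submodule.norm_starProjection_apply_le _ _).trans (hu s hs)
  have hB : 0 ≤ B := (norm_nonneg _).trans (hu 0 le_rfl)
  have hgronwall := norm_le_gronwallBound_of_inner_deriv_right_le (f := fun s => P (y s))
    (a := 0) (b := t) (fun s hs => (hderiv s hs.1).continuousAt.continuousWithinAt)
    (fun s hs => (hderiv s hs.1).hasDerivWithinAt) le_rfl (fun s hs => hinner s hs.1)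
    (fun s hs => hzero s hs.1) t ⟨ht, le_rfl⟩
  rw [sub_zero] at hgronwall
  exact hgronwall.trans (gronwallBound_neg_le (mul_pos hK hlam) hB t)

theorem Matrix.exists_real_eigenvector_of_hasEigenvalue_map_ofReal {n : Type*} [Fintype n]
    [DecidableEq n] (Q : Matrix n n ℝ) {μ : ℝ}
    (hμ : HasEigenvalue (Q.map Complex.ofReal).toEuclideanLin μ) :
    ∃ w : n → ℝ, w ≠ 0 ∧ Q.mulVec w = μ • w := by
  obtain ⟨v, hv⟩ := hμ.exists_hasEigenvector
  have h := congrFun (congrArg WithLp.ofLp hv.apply_eq_smul)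
  have hre : Q.mulVec (fun j => (v j).re) = μ • fun j => (v j).re := funext fun i => by
    simpa [Matrix.mulVec, dotProduct, Complex.re_sum] using congrArg Complex.re (h i)
  have him : Q.mulVec (fun j => (v j).im) = μ • fun j => (v j).im := funext fun i => by
    simpa [Matrix.mulVec, dotProduct, Complex.im_sum] using congrArg Complex.im (h i)
  by_cases hre0 : (fun j => (v j).re) = 0
  · refine ⟨_, fun him0 => hv.2 ((WithLp.ofLp_eq_zero 2).1 ?_), him⟩
    exact funext fun j => Complex.ext (congrFun hre0 j) (congrFun him0 j)
  · exact ⟨_, hre0, hre⟩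

theorem herm_eq_inner {N : ℕ} (x y : Fin N → ℂ) :
    herm x y = inner ℂ (WithLp.toLp 2 x) (WithLp.toLp 2 y) := by
  simp [herm, PiLp.inner_apply, mul_comm]

theorem eucNorm_eq_norm {N : ℕ} (v : Fin N → ℂ) : eucNorm v = ‖WithLp.toLp 2 v‖ :=
  (EuclideanSpace.norm_eq _).symm

theorem toLp_sub_eq_starProjection_orthogonal_ker {N : ℕ} {Q : Matrix (Fin N) (Fin N) ℂ}
    {Pr : (Fin N → ℂ) → (Fin N → ℂ)}
    (hPr : ∀ y, Q.mulVec (Pr y) = 0 ∧ ∀ v, Q.mulVec v = 0 → herm (y - Pr y) v = 0)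
    (v : Fin N → ℂ) :
    WithLp.toLp 2 (v - Pr v) =
      (LinearMap.ker Q.toEuclideanLin)ᗮ.starProjection (WithLp.toLp 2 v) := by
  rw [Submodule.starProjection_orthogonal_val,
    Submodule.eq_starProjection_of_mem_of_inner_eq_zero (v := WithLp.toLp 2 (Pr v))]
  · rfl
  · exact congrArg (WithLp.toLp 2) (hPr v).1
  · intro w hw
    rw [← WithLp.toLp_sub, ← herm_eq_inner]
    exact (hPr v).2 w (congrArg WithLp.ofLp hw)

theorem stmt4_general (N : ℕ)
    (Q : Matrix (Fin N) (Fin N) ℝ) (hQpsd : Q.PosSemidef)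
    -- `lam` is the smallest nonzero eigenvalue of `Q`
    (lam : ℝ) (hlam_pos : 0 < lam)
    (hlam : IsLeast {r : ℝ | r ≠ 0 ∧ ∃ v : Fin N → ℝ, v ≠ 0 ∧ Q.mulVec v = r • v} lam)
    -- `Pr` is the orthogonal projection of `ℂ^N` onto the kernel of `Q` (viewed in `ℂ^N`):
    -- `Pr y` lies in the kernel, and `y - Pr y` is orthogonal to the kernel
    (Pr : (Fin N → ℂ) → (Fin N → ℂ))
    (hPr : ∀ y : Fin N → ℂ,
      (Q.map (Complex.ofReal)).mulVec (Pr y) = 0 ∧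
      ∀ v : Fin N → ℂ, (Q.map (Complex.ofReal)).mulVec v = 0 → herm (y - Pr y) v = 0)
    (K : ℝ) (hK : 0 < K) (B : ℝ)
    (u : ℝ → Fin N → ℂ)
    (hu_bound : ∀ t ≥ (0 : ℝ), eucNorm (u t) ≤ B)
    (y : ℝ → Fin N → ℂ)
    (hy : ∀ t ≥ (0 : ℝ),
      HasDerivAt y (u t - K • (Q.map (Complex.ofReal)).mulVec (y t)) t) :
    ∀ t ≥ (0 : ℝ),
      eucNorm (y t - Pr (y t)) ≤
        Real.exp (-(K * lam) * t) * eucNorm (y 0 - Pr (y 0)) + B / (K * lam) := by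
  let T := (Q.map Complex.ofReal).toEuclideanLin
  have hT : T.IsSymmetric := Matrix.isSymmetric_toEuclideanLin_iff.2
    (hQpsd.isHermitian.map _ fun r => (Complex.conj_ofReal r).symm)
  have hcoer : ∀ x ∈ (LinearMap.ker T)ᗮ, lam * ‖x‖ ^ 2 ≤ (inner ℂ x (T x)).re := fun x hx =>
    hT.mul_norm_sq_le_re_inner_apply_of_mem_orthogonal_ker (fun μ hμ hμT =>
      hlam.2 ⟨hμ, Q.exists_real_eigenvector_of_hasEigenvalue_map_ofReal hμT⟩) hx
  have hu : ∀ s ≥ (0 : ℝ), ‖WithLp.toLp 2 (u s)‖ ≤ B := fun s hs =>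
    eucNorm_eq_norm (u s) ▸ hu_bound s hs
  have hy' : ∀ s ≥ (0 : ℝ), HasDerivAt (fun s => WithLp.toLp 2 (y s))
      (WithLp.toLp 2 (u s) - K • T (WithLp.toLp 2 (y s))) s := fun s hs =>
    (PiLp.hasFDerivAt_toLp (𝕜 := ℝ) 2 (y s)).comp_hasDerivAt s (hy s hs)
  intro t ht
  rw [eucNorm_eq_norm, eucNorm_eq_norm, toLp_sub_eq_starProjection_orthogonal_ker hPr,
    toLp_sub_eq_starProjection_orthogonal_ker hPr]
  exact norm_starProjection_orthogonal_ker_le_of_hasDerivAt hlam_pos hK hcoer hu hy' t ht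

theorem stmt4 (N : ℕ) (hN : 1 ≤ N)
    (Q : Matrix (Fin N) (Fin N) ℝ) (hQ0 : Q ≠ 0) (hQsymm : Q.IsSymm) (hQpsd : Q.PosSemidef)
    -- `lam` is the smallest nonzero eigenvalue of `Q`
    (lam : ℝ) (hlam_pos : 0 < lam)
    (hlam : IsLeast {r : ℝ | r ≠ 0 ∧ ∃ v : Fin N → ℝ, v ≠ 0 ∧ Q.mulVec v = r • v} lam)
    -- `Pr` is the orthogonal projection of `ℂ^N` onto the kernel of `Q` (viewed in `ℂ^N`):
    -- `Pr y` lies in the kernel, and `y - Pr y` is orthogonal to the kernel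
    (Pr : (Fin N → ℂ) → (Fin N → ℂ))
    (hPr : ∀ y : Fin N → ℂ,
      (Q.map (Complex.ofReal)).mulVec (Pr y) = 0 ∧
      ∀ v : Fin N → ℂ, (Q.map (Complex.ofReal)).mulVec v = 0 → herm (y - Pr y) v = 0)
    (K : ℝ) (hK : 0 < K) (B : ℝ) (hB : 0 ≤ B)
    (u : ℝ → Fin N → ℂ) (hu_cont : ContinuousOn u (Set.Ici 0))
    (hu_bound : ∀ t ≥ (0 : ℝ), eucNorm (u t) ≤ B)
    (y : ℝ → Fin N → ℂ)
    (hy : ∀ t ≥ (0 : ℝ),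
      HasDerivAt y (u t - K • (Q.map (Complex.ofReal)).mulVec (y t)) t) :
    ∀ t ≥ (0 : ℝ),
      eucNorm (y t - Pr (y t)) ≤
        Real.exp (-(K * lam) * t) * eucNorm (y 0 - Pr (y 0)) + B / (K * lam) :=
  stmt4_general N Q hQpsd lam hlam_pos hlam Pr hPr K hK B u hu_bound y hy
end

section
/- Let N ≥ 1, let Q ∈ ℝ^{N×N} be a nonzero symmetric positive semidefinite matrix with smallest nonzero eigenvalue λ_m > 0, let p := dim ker Q ≥ 1, and let P ∈ ℝ^{N×p} be a matrix whose columns form an orthonormal basis of ker Q. Let A ∈ ℂ^{N×N} and assume that every eigenvalue of PᵀAP ∈ ℂ^{p×p} has nonpositive real part. Then for every η > 0 and every 0 < T₁ ≤ T₂ there exists K* > 0 such that for all K ≥ K*: whenever y : [0,∞) → ℂ^N is differentiable with y'(t) = A y(t) − K Q y(t) and ‖y(t)‖ ≤ 1 for all t ≥ 0, and y_d : [0,∞) → ℂ^p is the solution of y_d'(t) = (PᵀAP) y_d(t) with y_d(0) = Pᵀ y(0), one has ‖y(t) − P y_d(t)‖ ≤ η for all t ∈ [T₁, T₂]. -/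
/-!
Split `y = (y - P Pᵀ y) + P Pᵀ y` into a fast part, orthogonal to `ker Q`, and a slow part in
`ker Q`. On the fast part `Q` is coercive with constant `λ_m`, so the energy estimate gives
`‖fast(t)‖² ≤ C (e^{-2Kλ_m t} + 1/K)`: after any fixed time `δ > 0` the fast part is small once `K`
is large. The slow error `d = Pᵀ y - y_d` solves `d' = (PᵀAP) d + PᵀA (fast)` with `d(0) = 0`, and
Grönwall's inequality on `[0, δ]`, where the forcing is merely bounded, and on `[δ, T₂]`, where it
is small, bounds `‖d‖` on `[T₁, T₂]` by something that tends to `0` as first `δ → 0`, then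
`K → ∞`.
-/

open Finset Matrix

noncomputable section

/-- The Euclidean norm on `ℂ^N`. -/
def cEnorm {N : ℕ} (v : Fin N → ℂ) : ℝ := Real.sqrt (∑ i, ‖v i‖ ^ 2)

open Filter Topology WithLp Module.End
open scoped RealInnerProductSpace

theorem norm_sq_le_of_hasDerivAt_sub_smul_coercive
    {E : Type*} [NormedAddCommGroup E] [InnerProductSpace ℝ E]
    {w f : ℝ → E} {L : E → E} {K lam C : ℝ} (hK : 0 < K) (hlam : 0 < lam) (hC : 0 ≤ C)
    (hw : ∀ t ≥ 0, HasDerivAt w (f t - K • L (w t)) t)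
    (hf : ∀ t ≥ 0, ⟪w t, f t⟫ ≤ C)
    (hL : ∀ t ≥ 0, lam * ‖w t‖ ^ 2 ≤ ⟪w t, L (w t)⟫)
    {t : ℝ} (ht : 0 ≤ t) :
    ‖w t‖ ^ 2 ≤ Real.exp (-(2 * (K * lam) * t)) * ‖w 0‖ ^ 2 + C / (K * lam) := by
  have hKlam : 0 < K * lam := mul_pos hK hlam
  have hderiv : ∀ s ≥ 0, HasDerivAt (‖w ·‖ ^ 2) (2 * ⟪w s, f s - K • L (w s)⟫) s :=
    fun s hs => (hw s hs).norm_sq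
  have hbound : ∀ s ≥ 0,
      2 * ⟪w s, f s - K • L (w s)⟫ ≤ -(2 * (K * lam)) * ‖w s‖ ^ 2 + 2 * C := by
    intro s hs
    rw [inner_sub_right, real_inner_smul_right]
    nlinarith [hf s hs, hL s hs]
  -- Grönwall's inequality, with the negative rate `-2Kλ`
  have hgr := le_gronwallBound_of_liminf_deriv_right_le (f := (‖w ·‖ ^ 2)) (a := 0) (b := t)
    (fun s hs => (hderiv s hs.1).continuousAt.continuousWithinAt)
    (fun s hs _ hr => (hderiv s hs.1).hasDerivWithinAt.liminf_right_slope_le hr)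
    le_rfl (fun s hs => hbound s hs.1) t ⟨ht, le_rfl⟩
  rw [sub_zero, gronwallBound_of_K_ne_0 (by linarith)] at hgr
  calc ‖w t‖ ^ 2 ≤ ‖w 0‖ ^ 2 * Real.exp (-(2 * (K * lam)) * t)
        + 2 * C / -(2 * (K * lam)) * (Real.exp (-(2 * (K * lam)) * t) - 1) := hgr
    _ ≤ _ := by
      rw [neg_mul, div_neg, mul_div_mul_left _ _ two_ne_zero]
      nlinarith [Real.exp_pos (-(2 * (K * lam) * t)), div_nonneg hC hKlam.le]

theorem norm_le_gronwallBound_two_phase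
    {E : Type*} [NormedAddCommGroup E] [NormedSpace ℝ E]
    {f f' : ℝ → E} {K ε₁ ε₂ δ T : ℝ} (hK : 0 ≤ K) (hε₂ : 0 ≤ ε₂) (hδ : 0 ≤ δ)
    (hf : ∀ t ≥ 0, HasDerivAt f (f' t) t) (hf0 : f 0 = 0)
    (h₁ : ∀ t ∈ Set.Ico 0 δ, ‖f' t‖ ≤ K * ‖f t‖ + ε₁)
    (h₂ : ∀ t ∈ Set.Ico δ T, ‖f' t‖ ≤ K * ‖f t‖ + ε₂) :
    ∀ t ∈ Set.Icc δ T, ‖f t‖ ≤ gronwallBound (gronwallBound 0 K ε₁ δ) K ε₂ T := by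
  intro t ht
  have hgr : ∀ a ≥ 0, ∀ {b δ₀ ε}, ‖f a‖ ≤ δ₀ → (∀ s ∈ Set.Ico a b, ‖f' s‖ ≤ K * ‖f s‖ + ε) →
      ∀ s ∈ Set.Icc a b, ‖f s‖ ≤ gronwallBound δ₀ K ε (s - a) := fun a ha _ _ _ h₀ hb =>
    norm_le_gronwallBound_of_norm_deriv_right_le
      (fun s hs => (hf s (ha.trans hs.1)).continuousAt.continuousWithinAt)
      (fun s hs => (hf s (ha.trans hs.1)).hasDerivWithinAt) h₀ hb
  have hfδ : ‖f δ‖ ≤ gronwallBound 0 K ε₁ δ := by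
    simpa using hgr 0 le_rfl (by simp [hf0]) h₁ δ ⟨hδ, le_rfl⟩
  calc ‖f t‖ ≤ gronwallBound (gronwallBound 0 K ε₁ δ) K ε₂ (t - δ) := hgr δ hδ hfδ h₂ t ht
    _ ≤ gronwallBound (gronwallBound 0 K ε₁ δ) K ε₂ T :=
      gronwallBound_mono ((norm_nonneg _).trans hfδ) hε₂ hK (by linarith [ht.2])

/-- `ι` embeds the slow coordinates `F` into the state space `E` and `π` reads them off; for the
matrix problem `ι = P`, `π = Pᵀ` and `lam = λ_m`. -/
structure IsCoerciveSplitting {E F : Type*} [NormedAddCommGroup E] [InnerProductSpace ℝ E]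
    [NormedAddCommGroup F] [NormedSpace ℝ F]
    (ι : F →L[ℝ] E) (π : E →L[ℝ] F) (Q : E →L[ℝ] E) (lam : ℝ) : Prop where
  π_ι : ∀ v, π (ι v) = v
  Q_ι : ∀ v, Q (ι v) = 0
  π_Q : ∀ x, π (Q x) = 0
  coercive : ∀ x, π x = 0 → lam * ‖x‖ ^ 2 ≤ ⟪x, Q x⟫

namespace IsCoerciveSplitting

variable {E F : Type*} [NormedAddCommGroup E] [InnerProductSpace ℝ E]
  [NormedAddCommGroup F] [NormedSpace ℝ F]
  {ι : F →L[ℝ] E} {π : E →L[ℝ] F} {Q : E →L[ℝ] E} {lam : ℝ}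

lemma π_fast (h : IsCoerciveSplitting ι π Q lam) (x : E) : π ((1 - ι ∘L π) x) = 0 := by
  simp [h.π_ι]

lemma hasDerivAt_fast (h : IsCoerciveSplitting ι π Q lam) (A : E →L[ℝ] E) {y : ℝ → E}
    {K t : ℝ} (hy : HasDerivAt y (A (y t) - K • Q (y t)) t) :
    HasDerivAt (fun s => (1 - ι ∘L π) (y s))
      ((1 - ι ∘L π) (A (y t)) - K • Q ((1 - ι ∘L π) (y t))) t := by
  refine ((1 - ι ∘L π).hasFDerivAt.comp_hasDerivAt t hy).congr_deriv ?_
  simp [h.π_Q, h.Q_ι]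
  abel

lemma hasDerivAt_slow (h : IsCoerciveSplitting ι π Q lam) (A : E →L[ℝ] E)
    {y : ℝ → E} {yd : ℝ → F} {K t : ℝ}
    (hy : HasDerivAt y (A (y t) - K • Q (y t)) t) (hyd : HasDerivAt yd (π (A (ι (yd t)))) t) :
    HasDerivAt (fun s => π (y s) - yd s)
      ((π ∘L A ∘L ι) (π (y t) - yd t) + (π ∘L A) ((1 - ι ∘L π) (y t))) t := by
  refine ((π.hasFDerivAt.comp_hasDerivAt t hy).sub hyd).congr_deriv ?_
  simp [h.π_Q]

lemma norm_fast_sq_le (h : IsCoerciveSplitting ι π Q lam) (hlam : 0 < lam) (A : E →L[ℝ] E)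
    {y : ℝ → E} {K : ℝ} (hK : 0 < K) (hy : ∀ t ≥ 0, HasDerivAt y (A (y t) - K • Q (y t)) t)
    (hy1 : ∀ t ≥ 0, ‖y t‖ ≤ 1) {t : ℝ} (ht : 0 ≤ t) :
    ‖(1 - ι ∘L π) (y t)‖ ^ 2 ≤ Real.exp (-(2 * (K * lam) * t)) * ‖1 - ι ∘L π‖ ^ 2
      + ‖1 - ι ∘L π‖ * (‖1 - ι ∘L π‖ * ‖A‖) / (K * lam) := by
  set c := ‖1 - ι ∘L π‖
  have hW : ∀ s ≥ 0, ‖(1 - ι ∘L π) (y s)‖ ≤ c := fun s hs => by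
    simpa using (1 - ι ∘L π).le_opNorm_of_le (hy1 s hs)
  have hf : ∀ s ≥ 0, ‖(1 - ι ∘L π) (A (y s))‖ ≤ c * ‖A‖ := fun s hs => by
    simpa using (1 - ι ∘L π).le_opNorm_of_le (A.le_opNorm_of_le (hy1 s hs))
  refine (norm_sq_le_of_hasDerivAt_sub_smul_coercive (C := c * (c * ‖A‖)) hK hlam
    (by positivity) (fun s hs => h.hasDerivAt_fast A (hy s hs))
    (fun s hs => (real_inner_le_norm _ _).trans
      (mul_le_mul (hW s hs) (hf s hs) (norm_nonneg _) (norm_nonneg _)))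
    (fun s _ => h.coercive _ (h.π_fast _)) ht).trans ?_
  gcongr
  exact hW 0 le_rfl

lemma norm_sub_le_of_fast_le (h : IsCoerciveSplitting ι π Q lam) (A : E →L[ℝ] E)
    {y : ℝ → E} {yd : ℝ → F} {K : ℝ}
    (hy : ∀ t ≥ 0, HasDerivAt y (A (y t) - K • Q (y t)) t)
    (hyd : ∀ t ≥ 0, HasDerivAt yd (π (A (ι (yd t)))) t) (hyd0 : yd 0 = π (y 0))
    {c ε δ T : ℝ} (hε : 0 ≤ ε) (hδ : 0 ≤ δ)
    (hfast : ∀ s ≥ 0, ‖(1 - ι ∘L π) (y s)‖ ≤ c)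
    (hfastδ : ∀ s ≥ δ, ‖(1 - ι ∘L π) (y s)‖ ≤ ε) :
    ∀ t ∈ Set.Icc δ T, ‖y t - ι (yd t)‖ ≤ ε + ‖ι‖ * gronwallBound
      (gronwallBound 0 ‖π ∘L A ∘L ι‖ (‖π ∘L A‖ * c) δ) ‖π ∘L A ∘L ι‖ (‖π ∘L A‖ * ε) T := by
  intro t ht
  have hderiv_le : ∀ s, ∀ {b}, ‖(1 - ι ∘L π) (y s)‖ ≤ b →
      ‖(π ∘L A ∘L ι) (π (y s) - yd s) + (π ∘L A) ((1 - ι ∘L π) (y s))‖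
        ≤ ‖π ∘L A ∘L ι‖ * ‖π (y s) - yd s‖ + ‖π ∘L A‖ * b := fun s _ hb =>
    (norm_add_le _ _).trans (add_le_add ((π ∘L A ∘L ι).le_opNorm _)
      (((π ∘L A).le_opNorm _).trans (mul_le_mul_of_nonneg_left hb (norm_nonneg _))))
  have hslow := norm_le_gronwallBound_two_phase (norm_nonneg _) (by positivity) hδ
    (fun s hs => h.hasDerivAt_slow A (hy s hs) (hyd s hs)) (by simp [hyd0])
    (fun s hs => hderiv_le s (hfast s hs.1))
    (fun s hs => hderiv_le s (hfastδ s hs.1)) t ht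
  have hsplit : y t - ι (yd t) = (1 - ι ∘L π) (y t) + ι (π (y t) - yd t) := by
    simp
  rw [hsplit]
  exact (norm_add_le _ _).trans (add_le_add (hfastδ t ht.1)
    ((ι.le_opNorm _).trans (mul_le_mul_of_nonneg_left hslow (norm_nonneg _))))

theorem eventually_norm_sub_le (h : IsCoerciveSplitting ι π Q lam) (hlam : 0 < lam)
    (A : E →L[ℝ] E) {η : ℝ} (hη : 0 < η) {T₁ : ℝ} (hT₁ : 0 < T₁) (T₂ : ℝ) :
    ∀ᶠ K : ℝ in atTop, ∀ y : ℝ → E, (∀ t ≥ 0, HasDerivAt y (A (y t) - K • Q (y t)) t) →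
      (∀ t ≥ 0, ‖y t‖ ≤ 1) → ∀ yd : ℝ → F, (∀ t ≥ 0, HasDerivAt yd (π (A (ι (yd t)))) t) →
      yd 0 = π (y 0) → ∀ t ∈ Set.Icc T₁ T₂, ‖y t - ι (yd t)‖ ≤ η := by
  set c := ‖1 - ι ∘L π‖
  set M := ‖π ∘L A ∘L ι‖
  set S := ‖π ∘L A‖
  -- `Φ δ ε` bounds the error on `[T₁, T₂]` once the fast part is `≤ ε` from time `δ` on
  set Φ : ℝ → ℝ → ℝ := fun δ ε =>
    ε + ‖ι‖ * gronwallBound (gronwallBound 0 M (S * c) δ) M (S * ε) T₂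
  have hΦ_δ : Tendsto (fun δ => Φ δ 0) (𝓝 0) (𝓝 0) := by
    have hcont : Continuous (gronwallBound 0 M (S * c)) := continuous_iff_continuousAt.2
      fun x => (hasDerivAt_gronwallBound _ _ _ x).continuousAt
    simpa [Φ, gronwallBound_ε0, gronwallBound_x0] using
      (((hcont.mul continuous_const).const_mul ‖ι‖).tendsto 0)
  obtain ⟨δ, hδη, hδ⟩ := (((hΦ_δ.mono_left nhdsWithin_le_nhds).eventually (gt_mem_nhds hη)).and
    (Ioc_mem_nhdsGT hT₁)).exists
  set ε : ℝ → ℝ := fun K =>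
    √(Real.exp (-(2 * (K * lam) * δ)) * c ^ 2 + c * (c * ‖A‖) / (K * lam))
  have hε : Tendsto ε atTop (𝓝 0) := by
    have hexp := Real.tendsto_exp_neg_atTop_nhds_zero.comp
      (((tendsto_id.atTop_mul_const hlam).const_mul_atTop two_pos).atTop_mul_const hδ.1)
    simpa using ((hexp.mul_const (c ^ 2)).add
      (tendsto_const_nhds.div_atTop (tendsto_id.atTop_mul_const hlam))).sqrt
  have hΦ_ε : Tendsto (fun K => Φ δ (ε K)) atTop (𝓝 (Φ δ 0)) :=
    ((continuous_id.add (((gronwallBound_continuous_ε _ _ _).comp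
      (continuous_const.mul continuous_id)).const_mul _)).tendsto 0).comp hε
  filter_upwards [hΦ_ε.eventually (gt_mem_nhds hδη), eventually_gt_atTop (0 : ℝ)]
    with K hKη hK y hy hy1 yd hyd hyd0 t ht
  have hfast : ∀ s ≥ 0, ‖(1 - ι ∘L π) (y s)‖ ≤ c := fun s hs => by
    simpa using (1 - ι ∘L π).le_opNorm_of_le (hy1 s hs)
  have hfastδ : ∀ s ≥ δ, ‖(1 - ι ∘L π) (y s)‖ ≤ ε K := by
    intro s hs
    refine (Real.le_sqrt (norm_nonneg _) (by positivity)).2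
      ((h.norm_fast_sq_le hlam A hK hy hy1 (hδ.1.le.trans hs)).trans ?_)
    gcongr
  exact (h.norm_sub_le_of_fast_le A hy hyd hyd0 (Real.sqrt_nonneg _) hδ.1.le hfast hfastδ t
    ⟨hδ.2.trans ht.1, ht.2⟩).trans hKη.le

end IsCoerciveSplitting

theorem LinearMap.IsSymmetric.mul_norm_sq_le_inner_map_self
    {E : Type*} [NormedAddCommGroup E] [InnerProductSpace ℝ E] [FiniteDimensional ℝ E]
    {T : E →ₗ[ℝ] E} (hT : T.IsSymmetric) {lam : ℝ}
    (hlam : ∀ μ : ℝ, μ ≠ 0 → HasEigenvalue T μ → lam ≤ μ)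
    {x : E} (hx : ∀ v, T v = 0 → ⟪v, x⟫ = 0) :
    lam * ‖x‖ ^ 2 ≤ ⟪x, T x⟫ := by
  set b := hT.eigenvectorBasis rfl
  set μ := hT.eigenvalues rfl
  have hTb : ∀ i, T (b i) = μ i • b i := hT.apply_eigenvectorBasis rfl
  have hquad : ⟪x, T x⟫ = ∑ i, μ i * ⟪b i, x⟫ ^ 2 := by
    rw [← b.sum_inner_mul_inner]
    refine Finset.sum_congr rfl fun i _ => ?_
    rw [← hT, hTb, real_inner_smul_left, real_inner_comm x]
    ring
  rw [hquad, ← b.sum_sq_inner_right, Finset.mul_sum]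
  refine Finset.sum_le_sum fun i _ => ?_
  by_cases hμ : μ i = 0
  · rw [hx _ (by rw [hTb, hμ, zero_smul])]
    simp
  · exact mul_le_mul_of_nonneg_right (hlam _ hμ (hT.hasEigenvalue_eigenvalues rfl i))
      (sq_nonneg _)

section EuclideanMatrix

variable {m n : Type*} [Fintype n]

lemma Matrix.IsHermitian.mul_dotProduct_le_of_spectralGap [Fintype m] [DecidableEq n]
    {Q : Matrix n n ℝ} (hQ : Q.IsHermitian) {lam : ℝ}
    (hlam : ∀ r ≠ 0, ∀ v ≠ 0, Q *ᵥ v = r • v → lam ≤ r)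
    {P : Matrix n m ℝ} (hker : ∀ v, Q *ᵥ v = 0 → ∃ c, v = P *ᵥ c)
    {a : n → ℝ} (ha : Pᵀ *ᵥ a = 0) : lam * (a ⬝ᵥ a) ≤ a ⬝ᵥ Q *ᵥ a := by
  have h := (isSymmetric_toEuclideanLin_iff.2 hQ).mul_norm_sq_le_inner_map_self
    (x := toLp 2 a) (lam := lam) ?_ ?_
  · rwa [← real_inner_self_eq_norm_sq, EuclideanSpace.inner_toLp_toLp, star_trivial,
      toLpLin_toLp, EuclideanSpace.inner_toLp_toLp, star_trivial, toLin'_apply,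
      dotProduct_comm (Q *ᵥ a)] at h
  · intro μ hμ hev
    obtain ⟨u, hu⟩ := hev.exists_hasEigenvector
    exact hlam μ hμ (ofLp u) (by simpa using hu.2) (congrArg ofLp (mem_eigenspace_iff.1 hu.1))
  · intro v hv
    obtain ⟨c, hc⟩ := hker (ofLp v) (congrArg ofLp hv)
    rw [← toLp_ofLp 2 v, EuclideanSpace.inner_toLp_toLp, star_trivial, hc, dotProduct_mulVec,
      ← mulVec_transpose, ha, zero_dotProduct]

/-- Only real-linear: the energy estimates use the real inner product `re ⟪x, y⟫_ℂ`. -/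
def euclideanMulVec [Fintype m] [DecidableEq n] (M : Matrix m n ℂ) :
    EuclideanSpace ℂ n →L[ℝ] EuclideanSpace ℂ m :=
  (LinearMap.toContinuousLinearMap (toEuclideanLin M)).restrictScalars ℝ

@[simp]
lemma euclideanMulVec_toLp [Fintype m] [DecidableEq n] (M : Matrix m n ℂ) (v : n → ℂ) :
    euclideanMulVec M (toLp 2 v) = toLp 2 (M *ᵥ v) := rfl

lemma euclideanMulVec_mul {k : Type*} [Fintype k] [Fintype m] [DecidableEq m] [DecidableEq n]
    (L : Matrix k m ℂ) (M : Matrix m n ℂ) (x : EuclideanSpace ℂ n) :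
    euclideanMulVec L (euclideanMulVec M x) = euclideanMulVec (L * M) x := by
  rw [← toLp_ofLp 2 x]
  simp only [euclideanMulVec_toLp, mulVec_mulVec]

lemma Matrix.map_ofReal_mul {k : Type*} (L : Matrix m n ℝ) (M : Matrix n k ℝ) :
    (L * M).map Complex.ofReal = L.map Complex.ofReal * M.map Complex.ofReal :=
  Matrix.map_mul (f := Complex.ofRealHom)

lemma Matrix.re_map_ofReal_mulVec (M : Matrix m n ℝ) (v : n → ℂ) (i : m) :
    ((M.map Complex.ofReal *ᵥ v) i).re = (M *ᵥ fun j => (v j).re) i := by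
  simp [mulVec, dotProduct, Complex.re_sum]

lemma Matrix.im_map_ofReal_mulVec (M : Matrix m n ℝ) (v : n → ℂ) (i : m) :
    ((M.map Complex.ofReal *ᵥ v) i).im = (M *ᵥ fun j => (v j).im) i := by
  simp [mulVec, dotProduct, Complex.im_sum]

lemma EuclideanSpace.norm_sq_eq_re_dotProduct_add_im (x : EuclideanSpace ℂ n) :
    ‖x‖ ^ 2 = (fun i => (x i).re) ⬝ᵥ (fun i => (x i).re)
      + (fun i => (x i).im) ⬝ᵥ (fun i => (x i).im) := by
  simp [EuclideanSpace.norm_sq_eq, Complex.sq_norm, Complex.normSq_apply, dotProduct,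
    Finset.sum_add_distrib]

lemma inner_euclideanMulVec_map_ofReal [DecidableEq n] (Q : Matrix n n ℝ)
    (x : EuclideanSpace ℂ n) :
    ⟪x, euclideanMulVec (Q.map Complex.ofReal) x⟫ =
      (fun i => (x i).re) ⬝ᵥ Q *ᵥ (fun i => (x i).re)
        + (fun i => (x i).im) ⬝ᵥ Q *ᵥ (fun i => (x i).im) := by
  rw [← toLp_ofLp 2 x, euclideanMulVec_toLp]
  simp [PiLp.inner_apply, re_map_ofReal_mulVec, im_map_ofReal_mulVec, dotProduct,
    Finset.sum_add_distrib, mul_comm]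

theorem isCoerciveSplitting_euclideanMulVec [Fintype m] [DecidableEq m] [DecidableEq n]
    {Q : Matrix n n ℝ} (hQ : Q.IsHermitian) {lam : ℝ}
    (hlam : ∀ r ≠ 0, ∀ v ≠ 0, Q *ᵥ v = r • v → lam ≤ r)
    {P : Matrix n m ℝ} (hPortho : Pᵀ * P = 1) (hQP : Q * P = 0)
    (hker : ∀ v, Q *ᵥ v = 0 → ∃ c, v = P *ᵥ c) :
    IsCoerciveSplitting (euclideanMulVec (P.map Complex.ofReal))
      (euclideanMulVec (P.map Complex.ofReal)ᵀ) (euclideanMulVec (Q.map Complex.ofReal)) lam := by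
  have hPQ : Pᵀ * Q = 0 := by
    rw [← hQ.eq, conjTranspose_eq_transpose_of_trivial, ← transpose_mul, hQP, transpose_zero]
  refine ⟨fun v => ?_, fun v => ?_, fun x => ?_, fun x hx => ?_⟩
  · rw [euclideanMulVec_mul, ← transpose_map, ← map_ofReal_mul, hPortho, ← toLp_ofLp 2 v,
      euclideanMulVec_toLp]
    simp
  · rw [euclideanMulVec_mul, ← map_ofReal_mul, hQP, ← toLp_ofLp 2 v, euclideanMulVec_toLp]
    simp
  · rw [euclideanMulVec_mul, ← transpose_map, ← map_ofReal_mul, hPQ, ← toLp_ofLp 2 x,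
      euclideanMulVec_toLp]
    simp
  · have hx' : (Pᵀ.map Complex.ofReal) *ᵥ ofLp x = 0 := congrArg ofLp hx
    have hre : Pᵀ *ᵥ (fun i => (x i).re) = 0 := by
      ext j; simpa [re_map_ofReal_mulVec] using congrArg Complex.re (congrFun hx' j)
    have him : Pᵀ *ᵥ (fun i => (x i).im) = 0 := by
      ext j; simpa [im_map_ofReal_mulVec] using congrArg Complex.im (congrFun hx' j)
    rw [EuclideanSpace.norm_sq_eq_re_dotProduct_add_im, inner_euclideanMulVec_map_ofReal, mul_add]
    exact add_le_add (hQ.mul_dotProduct_le_of_spectralGap hlam hker hre)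
      (hQ.mul_dotProduct_le_of_spectralGap hlam hker him)

lemma hasDerivAt_toLp {y : ℝ → n → ℂ} {y' : n → ℂ} {t : ℝ} (h : HasDerivAt y y' t) :
    HasDerivAt (fun s => toLp 2 (y s)) (toLp 2 y') t :=
  (PiLp.continuousLinearEquiv 2 ℝ (fun _ : n => ℂ)).symm.hasFDerivAt.comp_hasDerivAt t h

end EuclideanMatrix

lemma cEnorm_eq_norm_toLp {N : ℕ} (v : Fin N → ℂ) : cEnorm v = ‖toLp 2 v‖ := by
  rw [EuclideanSpace.norm_eq]
  rfl

theorem stmt5_general (N p : ℕ)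
    (Q : Matrix (Fin N) (Fin N) ℝ) (hQpsd : Q.PosSemidef)
    -- `lam` is the smallest nonzero eigenvalue of `Q`
    (lam : ℝ) (hlam_pos : 0 < lam)
    (hlam : IsLeast {r : ℝ | r ≠ 0 ∧ ∃ v : Fin N → ℝ, v ≠ 0 ∧ Q.mulVec v = r • v} lam)
    -- the columns of `P` form an orthonormal basis of `ker Q` (so `p = dim ker Q`)
    (P : Matrix (Fin N) (Fin p) ℝ)
    (hPortho : Pᵀ * P = 1)
    (hPker : ∀ j : Fin p, Q.mulVec (fun i => P i j) = 0)
    (hPspan : ∀ v : Fin N → ℝ, Q.mulVec v = 0 → ∃ c : Fin p → ℝ, v = P.mulVec c)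
    (A : Matrix (Fin N) (Fin N) ℂ) :
    ∀ η > (0 : ℝ), ∀ T₁ T₂ : ℝ, 0 < T₁ → T₁ ≤ T₂ →
      ∃ Kstar > (0 : ℝ), ∀ K ≥ Kstar,
        ∀ y : ℝ → Fin N → ℂ,
          (∀ t ≥ (0 : ℝ), HasDerivAt y
            (A.mulVec (y t) - K • (Q.map Complex.ofReal).mulVec (y t)) t) →
          (∀ t ≥ (0 : ℝ), cEnorm (y t) ≤ 1) →
          ∀ yd : ℝ → Fin p → ℂ,
            (∀ t ≥ (0 : ℝ), HasDerivAt yd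
              (((P.map Complex.ofReal)ᵀ * A * P.map Complex.ofReal).mulVec (yd t)) t) →
            yd 0 = ((P.map Complex.ofReal)ᵀ).mulVec (y 0) →
            ∀ t, T₁ ≤ t → t ≤ T₂ → cEnorm (y t - (P.map Complex.ofReal).mulVec (yd t)) ≤ η := by
  intro η hη T₁ T₂ hT₁ _
  have hQP : Q * P = 0 := by
    ext i j
    simpa [Matrix.mul_apply, mulVec, dotProduct] using congrFun (hPker j) i
  have hsplit := isCoerciveSplitting_euclideanMulVec hQpsd.1
    (fun r hr v hv hQv => hlam.2 ⟨hr, v, hv, hQv⟩) hPortho hQP hPspan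
  obtain ⟨K₀, hK₀⟩ := eventually_atTop.1
    (hsplit.eventually_norm_sub_le hlam_pos (euclideanMulVec A) hη hT₁ T₂)
  refine ⟨max K₀ 1, by positivity, fun K hK y hy hy1 yd hyd hyd0 t ht₁ ht₂ => ?_⟩
  rw [cEnorm_eq_norm_toLp, toLp_sub]
  refine hK₀ K (le_of_max_le_left hK) (fun s => toLp 2 (y s))
    (fun s hs => hasDerivAt_toLp (hy s hs))
    (fun s hs => cEnorm_eq_norm_toLp (y s) ▸ hy1 s hs) (fun s => toLp 2 (yd s))
    (fun s hs => (hasDerivAt_toLp (hyd s hs)).congr_deriv ?_) (congrArg (toLp 2) hyd0) t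
    ⟨ht₁, ht₂⟩
  simp [mulVec_mulVec, Matrix.mul_assoc]

theorem stmt5 (N p : ℕ) (hN : 1 ≤ N) (hp : 1 ≤ p)
    (Q : Matrix (Fin N) (Fin N) ℝ) (hQ0 : Q ≠ 0) (hQpsd : Q.PosSemidef)
    -- `lam` is the smallest nonzero eigenvalue of `Q`
    (lam : ℝ) (hlam_pos : 0 < lam)
    (hlam : IsLeast {r : ℝ | r ≠ 0 ∧ ∃ v : Fin N → ℝ, v ≠ 0 ∧ Q.mulVec v = r • v} lam)
    -- the columns of `P` form an orthonormal basis of `ker Q` (so `p = dim ker Q`)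
    (P : Matrix (Fin N) (Fin p) ℝ)
    (hPortho : Pᵀ * P = 1)
    (hPker : ∀ j : Fin p, Q.mulVec (fun i => P i j) = 0)
    (hPspan : ∀ v : Fin N → ℝ, Q.mulVec v = 0 → ∃ c : Fin p → ℝ, v = P.mulVec c)
    (A : Matrix (Fin N) (Fin N) ℂ)
    -- every eigenvalue of `PᵀAP` has nonpositive real part
    (hPAP : ∀ μ : ℂ,
      (∃ v : Fin p → ℂ, v ≠ 0 ∧
        ((P.map Complex.ofReal)ᵀ * A * P.map Complex.ofReal).mulVec v = μ • v) → μ.re ≤ 0) :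
    ∀ η > (0 : ℝ), ∀ T₁ T₂ : ℝ, 0 < T₁ → T₁ ≤ T₂ →
      ∃ Kstar > (0 : ℝ), ∀ K ≥ Kstar,
        ∀ y : ℝ → Fin N → ℂ,
          (∀ t ≥ (0 : ℝ), HasDerivAt y
            (A.mulVec (y t) - K • (Q.map Complex.ofReal).mulVec (y t)) t) →
          (∀ t ≥ (0 : ℝ), cEnorm (y t) ≤ 1) →
          ∀ yd : ℝ → Fin p → ℂ,
            (∀ t ≥ (0 : ℝ), HasDerivAt yd
              (((P.map Complex.ofReal)ᵀ * A * P.map Complex.ofReal).mulVec (yd t)) t) →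
            yd 0 = ((P.map Complex.ofReal)ᵀ).mulVec (y 0) →
            ∀ t, T₁ ≤ t → t ≤ T₂ → cEnorm (y t - (P.map Complex.ofReal).mulVec (yd t)) ≤ η :=
  stmt5_general N p Q hQpsd lam hlam_pos hlam P hPortho hPker hPspan A

end
end

section
/- Consider the n-qubit network Lindblad equation with diffusive coupling on a connected weighted graph. Then for every η > 0 and every T₁ > 0 there exists K* > 0 such that for every K ≥ K* and every K-solution ρ of the network Lindblad equation, one has ‖ρ(t) − P*(ρ(t))‖_F ≤ η for all t ≥ T₁. -/
open Finset Matrix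
open scoped ComplexOrder

attribute [local instance] Matrix.frobeniusSeminormedAddCommGroup
  Matrix.frobeniusNormedAddCommGroup Matrix.frobeniusNormedSpace

noncomputable section

/-- Matrices on the `n`-qubit Hilbert space, indexed by functions `Fin n → Fin 2`,
equipped with the Frobenius norm. -/
abbrev QMat (n : ℕ) : Type := Matrix (Fin n → Fin 2) (Fin n → Fin 2) ℂ

/-- The Lindblad dissipator `D(L)ρ = LρL† - (1/2)(L†Lρ + ρL†L)`. -/
def dissip {n : ℕ} (L X : QMat n) : QMat n :=
  L * X * Lᴴ - (1 / 2 : ℂ) • (Lᴴ * L * X + X * (Lᴴ * L))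

/-- The drift superoperator `𝒜ρ = -(i/ℏ)[H,ρ] + Σ_l γ_l D(L_l)ρ`. -/
def drift {n : ℕ} {ι : Type} [Fintype ι] (hbar : ℝ) (H : QMat n) (γ : ι → ℝ)
    (L : ι → QMat n) (X : QMat n) : QMat n :=
  (-(Complex.I / (hbar : ℂ))) • (H * X - X * H) + ∑ l, (γ l : ℂ) • dissip (L l) X

/-- The swap conjugation `Θ_{jk}ρ = U_{jk} ρ U_{jk}†`. -/
def swapConj {n : ℕ} (j k : Fin n) (X : QMat n) : QMat n :=
  Matrix.of fun f g => X (f ∘ Equiv.swap j k) (g ∘ Equiv.swap j k)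

/-- The diffusive coupling term `Σ_{j<k} a_{jk} (Θ_{jk}ρ - ρ)`. -/
def coupling {n : ℕ} (a : Fin n → Fin n → ℝ) (X : QMat n) : QMat n :=
  ∑ j, ∑ k, if j < k then a j k • (swapConj j k X - X) else 0

/-- The permutation-invariant projection `(P*ρ)(f,g) = (1/n!) Σ_π ρ(f∘π, g∘π)`. -/
def permProj {n : ℕ} (X : QMat n) : QMat n :=
  Matrix.of fun f g => (n.factorial : ℂ)⁻¹ * ∑ π : Equiv.Perm (Fin n), X (f ∘ π) (g ∘ π)

/-!
Write `x = ρ - P*ρ`. The coupling `C` satisfies `P* ∘ C = 0` and `C ∘ P* = 0`, so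
`x' = (1 - P*) 𝒜 ρ + K C x`. Since the swaps are Frobenius isometries,
`⟪x, C x⟫ = -½ Σ_{j<k} a_jk ‖Θ_jk x - x‖²`; it vanishes only if `x` is fixed by the swaps along
the edges, which generate `Sym(n)` because the graph is connected, and then `x = P* x`. So `-C` is
positive definite on `ker P*`, and compactness of the unit sphere gives a gap `λ > 0`.
Density matrices satisfy `‖ρ‖_F ≤ tr ρ = 1`, hence `‖(1 - P*) 𝒜 ρ‖ ≤ M` along the solution, and
`d/dt ‖x‖² ≤ 2 M ‖x‖ - 2 K λ ‖x‖²`. Grönwall gives `‖x t‖² ≤ e^{-Kλt} ‖x 0‖² + (M / Kλ)²`,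
which is below `η²` for `t ≥ T₁` once `K` is large.
-/

open Filter Topology

namespace Matrix

variable {m n : Type*} [Fintype m] [Fintype n]

theorem frobenius_norm_sq (A : Matrix m n ℂ) : ‖A‖ ^ 2 = ∑ i, ∑ j, ‖A i j‖ ^ 2 := by
  rw [frobenius_norm_def, ← Real.sqrt_eq_rpow, Real.sq_sqrt (by positivity)]
  simp only [Real.rpow_two]

instance frobeniusInnerProductSpace : InnerProductSpace ℝ (Matrix m n ℂ) where
  inner A B := (∑ i, ∑ j, star (A i j) * B i j).re
  norm_sq_eq_re_inner A := by
    simp [frobenius_norm_sq, Complex.re_sum, ← Complex.normSq_eq_norm_sq, Complex.normSq_apply]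
  conj_inner_symm A B := by
    simp only [conj_trivial, Complex.re_sum]
    refine sum_congr rfl fun i _ => sum_congr rfl fun j _ => ?_
    simp only [Complex.star_def, Complex.mul_re, Complex.conj_re, Complex.conj_im]
    ring
  add_left A B C := by
    simp [add_mul, sum_add_distrib, Complex.re_sum]
  smul_left A B r := by
    simp [Complex.re_sum, mul_sum, Complex.real_smul, mul_assoc]

theorem frobenius_norm_submatrix_equiv (A : Matrix m n ℂ) (e₁ : m ≃ m) (e₂ : n ≃ n) :
    ‖A.submatrix e₁ e₂‖ = ‖A‖ := by
  rw [frobenius_norm_def, frobenius_norm_def]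
  congr 1
  exact (Equiv.sum_comp e₁ fun i => ∑ j, ‖A i (e₂ j)‖ ^ (2 : ℝ)).trans
    (sum_congr rfl fun i _ => Equiv.sum_comp e₂ fun j => ‖A i j‖ ^ (2 : ℝ))

theorem frobenius_norm_vecMulVec_star (v : n → ℂ) :
    ‖vecMulVec v (star v)‖ = ∑ i, ‖v i‖ ^ 2 := by
  refine (sq_eq_sq₀ (norm_nonneg _) (by positivity)).mp ?_
  rw [frobenius_norm_sq, sq, sum_mul_sum]
  simp [vecMulVec_apply, mul_pow]

theorem PosSemidef.frobenius_norm_le_re_trace {A : Matrix n n ℂ} (hA : A.PosSemidef) :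
    ‖A‖ ≤ A.trace.re := by
  obtain ⟨k, v, rfl⟩ := posSemidef_iff_eq_sum_vecMulVec.mp hA
  calc ‖∑ i, vecMulVec (v i) (star (v i))‖ ≤ ∑ i, ‖vecMulVec (v i) (star (v i))‖ :=
        norm_sum_le _ _
    _ = (∑ i, vecMulVec (v i) (star (v i))).trace.re := by
        simp [frobenius_norm_vecMulVec_star, trace_sum, trace_vecMulVec, Complex.re_sum,
          dotProduct, Complex.mul_conj, Complex.normSq_eq_norm_sq, -Complex.ofReal_pow]

end Matrix

theorem SimpleGraph.Reachable.swap_mem {α : Type*} [DecidableEq α] {G : SimpleGraph α}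
    (M : Subgroup (Equiv.Perm α)) (hM : ∀ x y, G.Adj x y → Equiv.swap x y ∈ M) {x y : α}
    (h : G.Reachable x y) : Equiv.swap x y ∈ M := by
  obtain ⟨w⟩ := h
  induction w with
  | nil => rw [Equiv.swap_self]; exact M.one_mem
  | cons hadj _ ih => exact SubmonoidClass.swap_mem_trans M (hM _ _ hadj) ih

theorem SimpleGraph.Connected.eq_top_of_swap_mem {α : Type*} [DecidableEq α] [Finite α]
    {G : SimpleGraph α} (hG : G.Connected) (M : Subgroup (Equiv.Perm α))
    (hM : ∀ x y, G.Adj x y → Equiv.swap x y ∈ M) : M = ⊤ := by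
  rw [eq_top_iff, ← Equiv.Perm.closure_isSwap, Subgroup.closure_le]
  rintro _ ⟨x, y, -, rfl⟩
  exact (hG x y).swap_mem M hM

theorem Submodule.exists_pos_mul_norm_sq_le {E : Type*} [NormedAddCommGroup E]
    [NormedSpace ℝ E] [FiniteDimensional ℝ E] (V : Submodule ℝ E) {q : E → ℝ}
    (hq : Continuous q) (hsmul : ∀ (r : ℝ) x, q (r • x) = r ^ 2 * q x)
    (hpos : ∀ x ∈ V, x ≠ 0 → 0 < q x) :
    ∃ c > 0, ∀ x ∈ V, c * ‖x‖ ^ 2 ≤ q x := by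
  set S := (V : Set E) ∩ Metric.sphere 0 1
  have hq0 : q 0 = 0 := by simpa using hsmul 0 0
  have hunit : ∀ x ∈ V, x ≠ 0 → ‖x‖⁻¹ • x ∈ S := fun x hx hx0 =>
    ⟨V.smul_mem _ hx, by simp [norm_smul, norm_ne_zero_iff.mpr hx0]⟩
  rcases S.eq_empty_or_nonempty with hS | hS
  · refine ⟨1, one_pos, fun x hx => ?_⟩
    obtain rfl | hx0 := eq_or_ne x 0
    · simp [hq0]
    · exact absurd (hunit x hx hx0) (hS ▸ Set.notMem_empty _)
  obtain ⟨z, ⟨hzV, hz1⟩, hzmin⟩ :=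
    ((isCompact_sphere 0 1).inter_left V.closed_of_finiteDimensional).exists_isMinOn hS
      hq.continuousOn
  refine ⟨q z, hpos z hzV (ne_zero_of_mem_unit_sphere ⟨z, hz1⟩), fun x hx => ?_⟩
  obtain rfl | hx0 := eq_or_ne x 0
  · simp [hq0]
  calc q z * ‖x‖ ^ 2 ≤ q (‖x‖⁻¹ • x) * ‖x‖ ^ 2 := by gcongr; exact hzmin (hunit x hx hx0)
    _ = q x := by rw [hsmul]; field_simp

theorem norm_sq_le_of_inner_deriv_le {E : Type*} [NormedAddCommGroup E] [InnerProductSpace ℝ E]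
    {x v : ℝ → E} {c M : ℝ} (hc : 0 < c)
    (hx : ∀ t ≥ 0, HasDerivAt x (v t) t)
    (hv : ∀ t ≥ 0, inner ℝ (x t) (v t) ≤ M * ‖x t‖ - c * ‖x t‖ ^ 2) {t : ℝ} (ht : 0 ≤ t) :
    ‖x t‖ ^ 2 ≤ Real.exp (-c * t) * ‖x 0‖ ^ 2 + (M / c) ^ 2 := by
  have hderiv : ∀ s ≥ 0, HasDerivAt (‖x ·‖ ^ 2) (2 * inner ℝ (x s) (v s)) s :=
    fun s hs => (hx s hs).norm_sq
  -- AM–GM linearises the estimate, so that Grönwall's inequality applies to `‖x‖²`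
  have hlin : ∀ s ≥ 0, 2 * inner ℝ (x s) (v s) ≤ -c * ‖x s‖ ^ 2 + M ^ 2 / c := by
    intro s hs
    have hamgm : 2 * M * ‖x s‖ ≤ c * ‖x s‖ ^ 2 + M ^ 2 / c := by
      rw [← sub_nonneg]
      have : c * ‖x s‖ ^ 2 + M ^ 2 / c - 2 * M * ‖x s‖ = (c * ‖x s‖ - M) ^ 2 / c := by
        field_simp; ring
      rw [this]; positivity
    linarith [hv s hs]
  have hbound := le_gronwallBound_of_liminf_deriv_right_le (f := (‖x ·‖ ^ 2))
    (a := 0) (b := t) (δ := ‖x 0‖ ^ 2)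
    (fun s hs => (hderiv s hs.1).continuousAt.continuousWithinAt)
    (fun s hs _ hr => (hderiv s hs.1).hasDerivWithinAt.liminf_right_slope_le hr)
    le_rfl (fun s hs => hlin s hs.1) t ⟨ht, le_rfl⟩
  rw [gronwallBound_of_K_ne_0 (neg_ne_zero.mpr hc.ne'), sub_zero] at hbound
  have hrate : M ^ 2 / c / -c = -(M / c) ^ 2 := by field_simp
  simp only [hrate] at hbound
  nlinarith [mul_nonneg (sq_nonneg (M / c)) (Real.exp_pos (-c * t)).le]

section NetworkLindblad

variable {n : ℕ}

def permConj (π : Equiv.Perm (Fin n)) (X : QMat n) : QMat n :=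
  X.submatrix (· ∘ π) (· ∘ π)

theorem norm_permConj (π : Equiv.Perm (Fin n)) (X : QMat n) : ‖permConj π X‖ = ‖X‖ :=
  X.frobenius_norm_submatrix_equiv (π.symm.arrowCongr (Equiv.refl _))
    (π.symm.arrowCongr (Equiv.refl _))

theorem permProj_permConj (π : Equiv.Perm (Fin n)) (X : QMat n) :
    permProj (permConj π X) = permProj X := by
  ext f g
  simp only [permProj, permConj, of_apply, submatrix_apply]
  congr 1
  exact Fintype.sum_equiv (Equiv.mulRight π) _ _ fun _ => rfl

theorem permConj_permProj (π : Equiv.Perm (Fin n)) (X : QMat n) :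
    permConj π (permProj X) = permProj X := by
  ext f g
  simp only [permProj, permConj, of_apply, submatrix_apply]
  congr 1
  exact Fintype.sum_equiv (Equiv.mulLeft π) _ _ fun _ => rfl

theorem permProj_eq_self {X : QMat n} (hX : ∀ π, permConj π X = X) : permProj X = X := by
  ext f g
  have hfix (π : Equiv.Perm (Fin n)) : X (f ∘ π) (g ∘ π) = X f g := congrFun₂ (hX π) f g
  simp [permProj, hfix, Fintype.card_perm, n.factorial_ne_zero]

theorem swapConj_eq_permConj (j k : Fin n) (X : QMat n) :
    swapConj j k X = permConj (Equiv.swap j k) X := rfl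

def permProjₗ : QMat n →ₗ[ℝ] QMat n where
  toFun := permProj
  map_add' X Y := by ext; simp [permProj, sum_add_distrib, mul_add]
  map_smul' r X := by ext; simp [permProj, mul_sum, Complex.real_smul, mul_left_comm]

def couplingₗ (a : Fin n → Fin n → ℝ) : QMat n →ₗ[ℝ] QMat n where
  toFun := coupling a
  map_add' X Y := by
    simp only [coupling, ← sum_add_distrib]
    refine sum_congr rfl fun j _ => sum_congr rfl fun k _ => ?_
    split_ifs
    · rw [← smul_add]
      congr 1
      ext
      simp only [swapConj, Matrix.add_apply, Matrix.sub_apply, of_apply]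
      ring
    · simp
  map_smul' r X := by
    simp only [coupling, smul_sum]
    refine sum_congr rfl fun j _ => sum_congr rfl fun k _ => ?_
    split_ifs
    · rw [smul_comm]; congr 1; ext; simp [swapConj, mul_sub]
    · simp

@[simp] theorem permProjₗ_apply (X : QMat n) : permProjₗ X = permProj X := rfl

@[simp] theorem couplingₗ_apply (a : Fin n → Fin n → ℝ) (X : QMat n) :
    couplingₗ a X = coupling a X := rfl

theorem permProj_coupling (a : Fin n → Fin n → ℝ) (X : QMat n) :
    permProj (coupling a X) = 0 := by
  rw [← permProjₗ_apply, coupling, map_sum]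
  refine sum_eq_zero fun j _ => ?_
  rw [map_sum]
  refine sum_eq_zero fun k _ => ?_
  split_ifs
  · rw [map_smul, map_sub, permProjₗ_apply, permProjₗ_apply, swapConj_eq_permConj,
      permProj_permConj, sub_self, smul_zero]
  · exact map_zero _

theorem coupling_permProj (a : Fin n → Fin n → ℝ) (X : QMat n) :
    coupling a (permProj X) = 0 :=
  sum_eq_zero fun j _ => sum_eq_zero fun k _ => by
    simp [swapConj_eq_permConj, permConj_permProj]

theorem inner_coupling_self (a : Fin n → Fin n → ℝ) (X : QMat n) :
    inner ℝ X (coupling a X) =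
      -∑ j, ∑ k, if j < k then a j k / 2 * ‖swapConj j k X - X‖ ^ 2 else 0 := by
  simp only [coupling, inner_sum, ← sum_neg_distrib]
  refine sum_congr rfl fun j _ => sum_congr rfl fun k _ => ?_
  split_ifs
  · have hnorm : ‖swapConj j k X‖ = ‖X‖ := norm_permConj _ X
    rw [real_inner_smul_right, inner_sub_right, real_inner_self_eq_norm_sq, ← hnorm]
    rw [norm_sub_sq_real, hnorm, real_inner_comm]
    ring
  · simp

def permStabilizer (X : QMat n) : Subgroup (Equiv.Perm (Fin n)) where
  carrier := {π | permConj π X = X}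
  one_mem' := rfl
  mul_mem' {σ π} (hσ : permConj σ X = X) (hπ : permConj π X = X) :=
    show permConj σ (permConj π X) = X by rw [hπ, hσ]
  inv_mem' {π} (hπ : permConj π X = X) :=
    show permConj π⁻¹ X = X by
      conv_lhs => rw [← hπ]
      exact congrArg (permConj · X) (inv_mul_cancel π)

theorem permConj_eq_self_of_swapConj_eq_self {a : Fin n → Fin n → ℝ}
    (ha_symm : ∀ j k, a j k = a k j)
    (ha_conn : (SimpleGraph.fromRel fun j k => 0 < a j k).Connected) {X : QMat n}
    (hX : ∀ j k, j < k → 0 < a j k → swapConj j k X = X) (π : Equiv.Perm (Fin n)) :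
    permConj π X = X := by
  have htop : permStabilizer X = ⊤ := ha_conn.eq_top_of_swap_mem _ fun j k ⟨hne, hjk⟩ => by
    have hpos : 0 < a j k := hjk.elim id (ha_symm j k ▸ ·)
    rcases hne.lt_or_gt with hlt | hgt
    · exact hX j k hlt hpos
    · rw [Equiv.swap_comm]
      exact hX k j hgt (ha_symm j k ▸ hpos)
  show π ∈ permStabilizer X
  rw [htop]
  exact Subgroup.mem_top π

theorem exists_coupling_gap {a : Fin n → Fin n → ℝ} (ha_nonneg : ∀ j k, 0 ≤ a j k)
    (ha_symm : ∀ j k, a j k = a k j)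
    (ha_conn : (SimpleGraph.fromRel fun j k => 0 < a j k).Connected) :
    ∃ lam > 0, ∀ X : QMat n, permProj X = 0 → inner ℝ X (coupling a X) ≤ -(lam * ‖X‖ ^ 2) := by
  have hterm (X : QMat n) (j k : Fin n) :
      0 ≤ if j < k then a j k / 2 * ‖swapConj j k X - X‖ ^ 2 else 0 := by
    have := ha_nonneg j k
    split_ifs <;> positivity
  have hsmul (r : ℝ) (X : QMat n) :
      -inner ℝ (r • X) (coupling a (r • X)) = r ^ 2 * -inner ℝ X (coupling a X) := by
    rw [← couplingₗ_apply, map_smul, real_inner_smul_left, real_inner_smul_right,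
      couplingₗ_apply]
    ring
  have hpos (X : QMat n) (hX : X ∈ LinearMap.ker permProjₗ) (hX0 : X ≠ 0) :
      0 < -inner ℝ X (coupling a X) := by
    rw [inner_coupling_self, neg_neg]
    refine (sum_nonneg fun j _ => sum_nonneg fun k _ => hterm X j k).lt_of_ne fun hzero => hX0 ?_
    have hswap (j k : Fin n) (hjk : j < k) (hajk : 0 < a j k) : swapConj j k X = X := by
      have hrow := (sum_eq_zero_iff_of_nonneg fun j _ => sum_nonneg fun k _ => hterm X j k).mp
        hzero.symm j (mem_univ j)
      have hjk0 := (sum_eq_zero_iff_of_nonneg fun k _ => hterm X j k).mp hrow k (mem_univ k)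
      rw [if_pos hjk] at hjk0
      simpa [hajk.ne', sub_eq_zero] using hjk0
    rw [← permProj_eq_self (permConj_eq_self_of_swapConj_eq_self ha_symm ha_conn hswap)]
    exact hX
  obtain ⟨lam, hlam, hgap⟩ := (LinearMap.ker permProjₗ).exists_pos_mul_norm_sq_le
    (by fun_prop : Continuous fun X : QMat n => -inner ℝ X (couplingₗ a X)) hsmul hpos
  exact ⟨lam, hlam, fun X hX => le_neg_of_le_neg (hgap X hX)⟩

theorem exists_bound_of_posSemidef_trace_eq_one {m E : Type*} [Fintype m]
    [SeminormedAddCommGroup E] {F : Matrix m m ℂ → E} (hF : Continuous F) :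
    ∃ M, ∀ ρ : Matrix m m ℂ, ρ.PosSemidef → ρ.trace = 1 → ‖F ρ‖ ≤ M := by
  obtain ⟨M, hM⟩ := (isCompact_closedBall (0 : Matrix m m ℂ) 1).exists_bound_of_continuousOn
    hF.continuousOn
  refine ⟨M, fun ρ hρ htr => hM ρ (mem_closedBall_zero_iff.mpr ?_)⟩
  simpa [htr] using hρ.frobenius_norm_le_re_trace

theorem permProj_sub_permProj (X : QMat n) : permProj (X - permProj X) = 0 := by
  rw [← permProjₗ_apply, map_sub, permProjₗ_apply, permProjₗ_apply,
    permProj_eq_self fun π => permConj_permProj π X, sub_self]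

theorem HasDerivAt.sub_permProj {a : Fin n → Fin n → ℝ} {ρ : ℝ → QMat n} {D : QMat n} {K t : ℝ}
    (h : HasDerivAt ρ (D + K • coupling a (ρ t)) t) :
    HasDerivAt (fun s => ρ s - permProj (ρ s))
      (D - permProj D + K • coupling a (ρ t - permProj (ρ t))) t := by
  have hP := (LinearMap.toContinuousLinearMap permProjₗ).hasFDerivAt.comp_hasDerivAt t h
  refine (h.sub hP).congr_deriv ?_
  change _ - permProjₗ _ = _
  rw [map_add, map_smul, permProjₗ_apply, permProjₗ_apply, permProj_coupling, smul_zero,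
    add_zero, ← couplingₗ_apply, ← couplingₗ_apply, map_sub, couplingₗ_apply, couplingₗ_apply,
    coupling_permProj, sub_zero]
  abel

theorem norm_sub_permProj_sq_le {a : Fin n → Fin n → ℝ} {lam K M R : ℝ}
    {D : QMat n → QMat n} {ρ : ℝ → QMat n} (hlam : 0 < lam)
    (hgap : ∀ X : QMat n, permProj X = 0 → inner ℝ X (coupling a X) ≤ -(lam * ‖X‖ ^ 2))
    (hK : 0 < K) (hderiv : ∀ t ≥ 0, HasDerivAt ρ (D (ρ t) + K • coupling a (ρ t)) t)
    (hM : ∀ t ≥ 0, ‖D (ρ t) - permProj (D (ρ t))‖ ≤ M)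
    (hR : ‖ρ 0 - permProj (ρ 0)‖ ≤ R) {t : ℝ} (ht : 0 ≤ t) :
    ‖ρ t - permProj (ρ t)‖ ^ 2 ≤ Real.exp (-(K * lam) * t) * R ^ 2 + (M / (K * lam)) ^ 2 := by
  set x := fun s => ρ s - permProj (ρ s)
  have hinner (s : ℝ) (hs : 0 ≤ s) :
      inner ℝ (x s) (D (ρ s) - permProj (D (ρ s)) + K • coupling a (x s)) ≤
        M * ‖x s‖ - K * lam * ‖x s‖ ^ 2 := by
    rw [inner_add_right, real_inner_smul_right]
    have hdrift := (real_inner_le_norm (x s) _).trans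
      (mul_le_mul_of_nonneg_left (hM s hs) (norm_nonneg (x s)))
    nlinarith [hgap (x s) (permProj_sub_permProj (ρ s))]
  calc ‖x t‖ ^ 2 ≤ Real.exp (-(K * lam) * t) * ‖x 0‖ ^ 2 + (M / (K * lam)) ^ 2 :=
        norm_sq_le_of_inner_deriv_le (mul_pos hK hlam)
          (fun s hs => (hderiv s hs).sub_permProj) hinner ht
    _ ≤ Real.exp (-(K * lam) * t) * R ^ 2 + (M / (K * lam)) ^ 2 := by gcongr

theorem continuous_drift {ι : Type} [Fintype ι] (hbar : ℝ) (H : QMat n) (γ : ι → ℝ)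
    (L : ι → QMat n) : Continuous (drift hbar H γ L) := by
  unfold drift dissip
  fun_prop

end NetworkLindblad

theorem stmt8_general {n : ℕ} {ι : Type} [Fintype ι] (hbar : ℝ) (H : QMat n)
    (γ : ι → ℝ) (L : ι → QMat n)
    -- symmetric nonnegative weights with zero diagonal and connected graph
    (a : Fin n → Fin n → ℝ) (ha_nonneg : ∀ j k, 0 ≤ a j k)
    (ha_symm : ∀ j k, a j k = a k j)
    (ha_conn : (SimpleGraph.fromRel fun j k => 0 < a j k).Connected) :
    ∀ η > (0 : ℝ), ∀ T₁ > (0 : ℝ),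
      ∃ Kstar > (0 : ℝ), ∀ K ≥ Kstar,
        ∀ ρ : ℝ → QMat n,
          (∀ t ≥ (0 : ℝ), (ρ t).PosSemidef ∧ (ρ t).trace = 1) →
          (∀ t ≥ (0 : ℝ), HasDerivAt ρ (drift hbar H γ L (ρ t) + K • coupling a (ρ t)) t) →
          ∀ t ≥ T₁, ‖ρ t - permProj (ρ t)‖ ≤ η := by
  intro η hη T₁ hT₁
  obtain ⟨lam, hlam, hgap⟩ := exists_coupling_gap ha_nonneg ha_symm ha_conn
  have hP : Continuous (permProjₗ : QMat n → QMat n) := by fun_prop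
  obtain ⟨M, hM⟩ := exists_bound_of_posSemidef_trace_eq_one
    ((continuous_drift hbar H γ L).sub (hP.comp (continuous_drift hbar H γ L)))
  obtain ⟨R, hR⟩ := exists_bound_of_posSemidef_trace_eq_one (continuous_id.sub hP)
  have hlim : Tendsto (fun K => Real.exp (-(K * lam) * T₁) * R ^ 2 + (M / (K * lam)) ^ 2)
      atTop (𝓝 0) := by
    have hKlam : Tendsto (fun K => K * lam) atTop atTop := tendsto_id.atTop_mul_const hlam
    simpa using ((Real.tendsto_exp_atBot.comp
      ((tendsto_neg_atTop_atBot.comp hKlam).atBot_mul_const hT₁)).mul_const (R ^ 2)).add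
      ((tendsto_const_nhds.div_atTop hKlam).pow 2)
  obtain ⟨K₀, hK₀⟩ := eventually_atTop.mp (hlim.eventually (gt_mem_nhds (pow_pos hη 2)))
  refine ⟨max K₀ 1, by positivity, fun K hK ρ hρ hderiv t ht => ?_⟩
  have hKpos : 0 < K := zero_lt_one.trans_le ((le_max_right _ _).trans hK)
  have hsq := norm_sub_permProj_sq_le hlam hgap hKpos hderiv
    (fun s hs => hM _ (hρ s hs).1 (hρ s hs).2) (hR _ (hρ 0 le_rfl).1 (hρ 0 le_rfl).2)
    (hT₁.le.trans ht)
  have hexp : Real.exp (-(K * lam) * t) ≤ Real.exp (-(K * lam) * T₁) :=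
    Real.exp_le_exp.mpr (by nlinarith [mul_pos hKpos hlam])
  refine (pow_le_pow_iff_left₀ (norm_nonneg _) hη.le two_ne_zero).mp ?_
  calc ‖ρ t - permProj (ρ t)‖ ^ 2
      ≤ Real.exp (-(K * lam) * t) * R ^ 2 + (M / (K * lam)) ^ 2 := hsq
    _ ≤ Real.exp (-(K * lam) * T₁) * R ^ 2 + (M / (K * lam)) ^ 2 := by gcongr
    _ ≤ η ^ 2 := (hK₀ K ((le_max_left _ _).trans hK)).le

theorem stmt8 {n : ℕ} (hn : 2 ≤ n) {ι : Type} [Fintype ι] (hbar : ℝ) (hhbar : 0 < hbar)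
    (H : QMat n) (hH : H.IsHermitian)
    (γ : ι → ℝ) (hγ : ∀ l, 0 < γ l) (L : ι → QMat n)
    -- symmetric nonnegative weights with zero diagonal and connected graph
    (a : Fin n → Fin n → ℝ) (ha_nonneg : ∀ j k, 0 ≤ a j k)
    (ha_symm : ∀ j k, a j k = a k j) (ha_diag : ∀ j, a j j = 0)
    (ha_conn : (SimpleGraph.fromRel fun j k => 0 < a j k).Connected) :
    ∀ η > (0 : ℝ), ∀ T₁ > (0 : ℝ),
      ∃ Kstar > (0 : ℝ), ∀ K ≥ Kstar,
        ∀ ρ : ℝ → QMat n,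
          (∀ t ≥ (0 : ℝ), (ρ t).PosSemidef ∧ (ρ t).trace = 1) →
          (∀ t ≥ (0 : ℝ), HasDerivAt ρ (drift hbar H γ L (ρ t) + K • coupling a (ρ t)) t) →
          ∀ t ≥ T₁, ‖ρ t - permProj (ρ t)‖ ≤ η :=
  stmt8_general hbar H γ L a ha_nonneg ha_symm ha_conn

end
end

section
/- Let n ≥ 2, index the computational basis of n qubits by the set F of functions f : {1,…,n} → {0,1}, and let a_{jk} ≥ 0 be symmetric weights with a_{jj} = 0 whose graph (edge {j,k} iff a_{jk} > 0) is connected. Then for every X ∈ M the following are equivalent: (i) Σ_{1≤j<k≤n} a_{jk}(X − Θ_{jk}X) = 0; (ii) X is permutation invariant, i.e., X(f∘π, g∘π) = X(f,g) for all π ∈ Sym(n) and all f, g ∈ F; (iii) P*X = X. Moreover, P* is the orthogonal projection of M onto the subspace of permutation-invariant matrices with respect to the Frobenius inner product ⟨X,Y⟩ := tr(X†Y); in particular P* is ℂ-linear, idempotent, and self-adjoint for this inner product. -/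
/-! Statement 11: characterization of the kernel of the induced Laplacian
superoperator on an n-qubit network as the permutation-invariant matrices, and
the fact that `P*` is the corresponding orthogonal projection for the Frobenius
inner product. -/

open Finset Matrix

noncomputable section

-- reindexing a single sum by precomposition with a permutation
lemma sum_comp_perm {n : ℕ} {M : Type*} [AddCommMonoid M] (π : Equiv.Perm (Fin n))
    (F : (Fin n → Fin 2) → M) : ∑ f : Fin n → Fin 2, F (f ∘ π) = ∑ f : Fin n → Fin 2, F f := by
  exact Fintype.sum_equiv (Equiv.arrowCongr π.symm (Equiv.refl (Fin 2)))
    (fun f => F (f ∘ π)) F (fun f => rfl)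

lemma sum2_comp_perm {n : ℕ} {M : Type*} [AddCommMonoid M] (π : Equiv.Perm (Fin n))
    (F : (Fin n → Fin 2) → (Fin n → Fin 2) → M) :
    ∑ f : Fin n → Fin 2, ∑ g : Fin n → Fin 2, F (f ∘ π) (g ∘ π)
      = ∑ f : Fin n → Fin 2, ∑ g : Fin n → Fin 2, F f g := by
  rw [sum_comp_perm π (fun f => ∑ g : Fin n → Fin 2, F f (g ∘ π))]
  · exact Finset.sum_congr rfl fun f _ => sum_comp_perm π (F f)

lemma comp_mul {n : ℕ} (f : Fin n → Fin 2) (π σ : Equiv.Perm (Fin n)) :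
    f ∘ (π * σ) = (f ∘ π) ∘ σ := rfl

lemma permProj_invariant {n : ℕ} (X : QMat n) (π : Equiv.Perm (Fin n))
    (f g : Fin n → Fin 2) : permProj X (f ∘ π) (g ∘ π) = permProj X f g := by
  simp only [permProj, Matrix.of_apply]
  congr 1
  exact Fintype.sum_equiv (Equiv.mulLeft π) (fun σ => X ((f ∘ π) ∘ σ) ((g ∘ π) ∘ σ))
    (fun σ => X (f ∘ σ) (g ∘ σ)) (fun σ => rfl)

lemma permProj_of_invariant {n : ℕ} (X : QMat n)
    (h : ∀ (π : Equiv.Perm (Fin n)) (f g : Fin n → Fin 2), X (f ∘ π) (g ∘ π) = X f g) :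
    permProj X = X := by
  ext f g
  simp only [permProj, Matrix.of_apply]
  rw [Finset.sum_congr rfl fun π _ => h π f g, Finset.sum_const, Finset.card_univ,
    Fintype.card_perm, Fintype.card_fin, nsmul_eq_mul, ← mul_assoc,
    inv_mul_cancel₀ (by exact_mod_cast Nat.factorial_ne_zero n), one_mul]

lemma permProj_add {n : ℕ} (X Y : QMat n) : permProj (X + Y) = permProj X + permProj Y := by
  ext f g
  simp [permProj, Finset.sum_add_distrib, mul_add]

lemma permProj_smul {n : ℕ} (c : ℂ) (X : QMat n) : permProj (c • X) = c • permProj X := by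
  ext f g
  simp only [permProj, Matrix.of_apply, Matrix.smul_apply, smul_eq_mul, Finset.mul_sum]
  exact Finset.sum_congr rfl fun _ _ => by ring

lemma permProj_idem {n : ℕ} (X : QMat n) : permProj (permProj X) = permProj X :=
  permProj_of_invariant _ (fun π f g => permProj_invariant X π f g)

lemma trace_conjT_mul {n : ℕ} (A B : QMat n) :
    (Aᴴ * B).trace = ∑ f : Fin n → Fin 2, ∑ g : Fin n → Fin 2,
      (starRingEnd ℂ) (A g f) * B g f := by
  simp [Matrix.trace, Matrix.mul_apply, Matrix.diag, Matrix.conjTranspose_apply]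

lemma permProj_selfAdjoint {n : ℕ} (X Y : QMat n) :
    ((permProj X)ᴴ * Y).trace = (Xᴴ * permProj Y).trace := by
  rw [trace_conjT_mul, trace_conjT_mul]
  simp only [permProj, Matrix.of_apply, Finset.sum_mul, Finset.mul_sum, map_sum, _root_.map_mul]
  conv_lhs => enter [2]; ext f; rw [Finset.sum_comm]
  conv_rhs => enter [2]; ext f; rw [Finset.sum_comm]
  conv_lhs => rw [Finset.sum_comm]
  conv_rhs => rw [Finset.sum_comm]
  have key : ∀ π : Equiv.Perm (Fin n),
      (∑ f : Fin n → Fin 2, ∑ g : Fin n → Fin 2,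
        (starRingEnd ℂ) ((↑n.factorial : ℂ)⁻¹) * (starRingEnd ℂ) (X (g ∘ π) (f ∘ π)) * Y g f)
      = ∑ f : Fin n → Fin 2, ∑ g : Fin n → Fin 2,
        (starRingEnd ℂ) (X g f) * ((↑n.factorial : ℂ)⁻¹ * Y (g ∘ ⇑π⁻¹) (f ∘ ⇑π⁻¹)) := by
    intro π
    rw [← sum2_comp_perm π (fun f g => (starRingEnd ℂ) (X g f) *
      ((↑n.factorial : ℂ)⁻¹ * Y (g ∘ ⇑π⁻¹) (f ∘ ⇑π⁻¹)))]
    refine Finset.sum_congr rfl fun f _ => Finset.sum_congr rfl fun g _ => ?_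
    have hf : (f ∘ ⇑π) ∘ ⇑π⁻¹ = f := by ext x; simp
    have hg : (g ∘ ⇑π) ∘ ⇑π⁻¹ = g := by ext x; simp
    rw [hf, hg, map_inv₀, map_natCast]; ring
  refine (Finset.sum_congr rfl fun π _ => key π).trans ?_
  exact Fintype.sum_equiv (Equiv.inv (Equiv.Perm (Fin n)))
    (fun π => ∑ f : Fin n → Fin 2, ∑ g : Fin n → Fin 2,
      (starRingEnd ℂ) (X g f) * ((↑n.factorial : ℂ)⁻¹ * Y (g ∘ ⇑π⁻¹) (f ∘ ⇑π⁻¹)))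
    (fun π => ∑ f : Fin n → Fin 2, ∑ g : Fin n → Fin 2,
      (starRingEnd ℂ) (X g f) * ((↑n.factorial : ℂ)⁻¹ * Y (g ∘ ⇑π) (f ∘ ⇑π)))
    (fun π => rfl)

lemma term_expand1 (a b : ℂ) :
    ((starRingEnd ℂ) a * (a - b)).re = Complex.normSq a - ((starRingEnd ℂ) a * b).re := by
  rw [mul_sub, Complex.sub_re, mul_comm, Complex.mul_conj, Complex.ofReal_re]

lemma term_expand2 (a b : ℂ) :
    Complex.normSq (a - b)
      = Complex.normSq a + Complex.normSq b
        - (((starRingEnd ℂ) a * b).re + ((starRingEnd ℂ) a * b).re) := by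
  rw [Complex.normSq_sub]
  have : (a * (starRingEnd ℂ) b).re = ((starRingEnd ℂ) a * b).re := by
    rw [← Complex.conj_re (a * (starRingEnd ℂ) b), _root_.map_mul, Complex.conj_conj, mul_comm]
  rw [this]; ring

lemma re_ip {n : ℕ} (X : QMat n) (j k : Fin n) :
    2 * (∑ f : Fin n → Fin 2, ∑ g : Fin n → Fin 2,
        (starRingEnd ℂ) (X f g) * ((X - swapConj j k X) f g)).re
    = ∑ f : Fin n → Fin 2, ∑ g : Fin n → Fin 2,
        Complex.normSq ((X - swapConj j k X) f g) := by
  have hB : (∑ f : Fin n → Fin 2, ∑ g : Fin n → Fin 2,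
      Complex.normSq (swapConj j k X f g))
      = ∑ f : Fin n → Fin 2, ∑ g : Fin n → Fin 2, Complex.normSq (X f g) :=
    sum2_comp_perm (Equiv.swap j k) (fun f g => Complex.normSq (X f g))
  simp only [Matrix.sub_apply, Complex.re_sum, term_expand1, term_expand2,
    Finset.sum_sub_distrib, Finset.sum_add_distrib]
  rw [hB]
  ring

/-- The real part of the Frobenius pairing with `X`, as an `ℝ`-linear map. -/
def ipRe {n : ℕ} (X : QMat n) : QMat n →ₗ[ℝ] ℝ where
  toFun B := ∑ f : Fin n → Fin 2, ∑ g : Fin n → Fin 2, ((starRingEnd ℂ) (X f g) * B f g).re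
  map_add' A B := by
    simp [Matrix.add_apply, mul_add, Complex.add_re, Finset.sum_add_distrib]
  map_smul' r A := by
    simp only [Matrix.smul_apply, mul_smul_comm, Complex.smul_re, Finset.mul_sum, smul_eq_mul,
      RingHom.id_apply, Complex.mul_re]

lemma ipRe_nonneg {n : ℕ} (X : QMat n) (j k : Fin n) :
    0 ≤ ipRe X (X - swapConj j k X) := by
  have h2 : 2 * ipRe X (X - swapConj j k X)
      = ∑ f : Fin n → Fin 2, ∑ g : Fin n → Fin 2,
          Complex.normSq ((X - swapConj j k X) f g) := by
    rw [← re_ip X j k]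
    congr 1
    simp [ipRe, Complex.re_sum]
  nlinarith [Finset.sum_nonneg (fun f (_ : f ∈ (Finset.univ : Finset (Fin n → Fin 2))) =>
    Finset.sum_nonneg (fun g (_ : g ∈ (Finset.univ : Finset (Fin n → Fin 2))) =>
      Complex.normSq_nonneg ((X - swapConj j k X) f g)))]

lemma ipRe_eq_zero_imp {n : ℕ} (X : QMat n) (j k : Fin n)
    (h : ipRe X (X - swapConj j k X) = 0) :
    ∀ f g : Fin n → Fin 2, X (f ∘ Equiv.swap j k) (g ∘ Equiv.swap j k) = X f g := by
  have h2 : (∑ f : Fin n → Fin 2, ∑ g : Fin n → Fin 2,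
      Complex.normSq ((X - swapConj j k X) f g)) = 0 := by
    rw [← re_ip X j k]
    have : (∑ f : Fin n → Fin 2, ∑ g : Fin n → Fin 2,
        (starRingEnd ℂ) (X f g) * ((X - swapConj j k X) f g)).re
        = ipRe X (X - swapConj j k X) := by simp [ipRe, Complex.re_sum]
    rw [this, h, mul_zero]
  intro f g
  have h3 := (Finset.sum_eq_zero_iff_of_nonneg (fun f _ => Finset.sum_nonneg
    (fun g _ => Complex.normSq_nonneg ((X - swapConj j k X) f g)))).mp h2 f (Finset.mem_univ f)
  have h4 := (Finset.sum_eq_zero_iff_of_nonneg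
    (fun g _ => Complex.normSq_nonneg ((X - swapConj j k X) f g))).mp h3 g (Finset.mem_univ g)
  have h5 : (X - swapConj j k X) f g = 0 := by
    exact Complex.normSq_eq_zero.mp h4
  have h6 : X f g - X (f ∘ Equiv.swap j k) (g ∘ Equiv.swap j k) = 0 := h5
  exact (sub_eq_zero.mp h6).symm

/-- From the vanishing of the Laplacian sum: invariance under each positively
weighted swap (with `j < k`). -/
lemma kernel_swaps {n : ℕ} (X : QMat n) (a : Fin n → Fin n → ℝ)
    (ha_nonneg : ∀ j k, 0 ≤ a j k)
    (hS : (∑ j, ∑ k, if j < k then a j k • (X - swapConj j k X) else 0) = 0) :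
    ∀ j k : Fin n, j < k → 0 < a j k →
      ∀ f g : Fin n → Fin 2, X (f ∘ Equiv.swap j k) (g ∘ Equiv.swap j k) = X f g := by
  have h0 : (∑ j, ∑ k, if j < k then a j k * ipRe X (X - swapConj j k X) else 0) = 0 := by
    have hcong : ∀ j k : Fin n, ipRe X (if j < k then a j k • (X - swapConj j k X) else 0)
        = if j < k then a j k * ipRe X (X - swapConj j k X) else 0 := by
      intro j k
      split
      · rw [_root_.map_smul, smul_eq_mul]
      · exact map_zero _
    calc (∑ j, ∑ k, if j < k then a j k * ipRe X (X - swapConj j k X) else 0)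
        = ∑ j, ∑ k, ipRe X (if j < k then a j k • (X - swapConj j k X) else 0) :=
          Finset.sum_congr rfl fun j _ => Finset.sum_congr rfl fun k _ => (hcong j k).symm
      _ = ipRe X (∑ j, ∑ k, if j < k then a j k • (X - swapConj j k X) else 0) := by
          rw [map_sum]
          exact Finset.sum_congr rfl fun j _ => (map_sum _ _ _).symm
      _ = 0 := by rw [hS, map_zero]
  have hterm : ∀ j k : Fin n, 0 ≤ if j < k then a j k * ipRe X (X - swapConj j k X) else 0 := by
    intro j k
    split
    · exact mul_nonneg (ha_nonneg j k) (ipRe_nonneg X j k)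
    · exact le_refl 0
  intro j k hjk ha
  have h1 := (Finset.sum_eq_zero_iff_of_nonneg (fun j _ => Finset.sum_nonneg
    (fun k _ => hterm j k))).mp h0 j (Finset.mem_univ j)
  have h2 := (Finset.sum_eq_zero_iff_of_nonneg (fun k _ => hterm j k)).mp h1 k (Finset.mem_univ k)
  rw [if_pos hjk] at h2
  have hz : ipRe X (X - swapConj j k X) = 0 := by
    rcases mul_eq_zero.mp h2 with h | h
    · exact absurd h (ne_of_gt ha)
    · exact h
  exact ipRe_eq_zero_imp X j k hz

lemma invariant_of_swaps {n : ℕ} (X : QMat n) (G : SimpleGraph (Fin n)) (hconn : G.Connected)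
    (hadj : ∀ j k : Fin n, G.Adj j k → ∀ f g : Fin n → Fin 2,
      X (f ∘ Equiv.swap j k) (g ∘ Equiv.swap j k) = X f g) :
    ∀ (π : Equiv.Perm (Fin n)) (f g : Fin n → Fin 2), X (f ∘ π) (g ∘ π) = X f g := by
  classical
  set H : Subgroup (Equiv.Perm (Fin n)) :=
    { carrier := {π | ∀ f g : Fin n → Fin 2, X (f ∘ π) (g ∘ π) = X f g}
      one_mem' := by
        intro f g
        simp
      mul_mem' := by
        intro p q hp hq f g
        have h1 : f ∘ ⇑(p * q) = (f ∘ ⇑p) ∘ ⇑q := rfl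
        have h2 : g ∘ ⇑(p * q) = (g ∘ ⇑p) ∘ ⇑q := rfl
        rw [h1, h2, hq (f ∘ ⇑p) (g ∘ ⇑p), hp f g]
      inv_mem' := by
        intro p hp f g
        have h1 : (f ∘ ⇑p⁻¹) ∘ ⇑p = f := by
          ext x; simp [Function.comp]
        have h2 : (g ∘ ⇑p⁻¹) ∘ ⇑p = g := by
          ext x; simp [Function.comp]
        have := hp (f ∘ ⇑p⁻¹) (g ∘ ⇑p⁻¹)
        rw [h1, h2] at this
        exact this.symm } with hHdef
  have hmem : ∀ j k : Fin n, G.Adj j k → Equiv.swap j k ∈ H := fun j k h => hadj j k h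
  have hwalk : ∀ j k : Fin n, G.Walk j k → Equiv.swap j k ∈ H := by
    intro j k w
    induction w with
    | nil =>
      rw [Equiv.swap_self]
      exact H.one_mem
    | @cons u v w h p ih =>
      rcases eq_or_ne v w with rfl | hvw
      · exact hmem _ _ h
      · rcases eq_or_ne u w with rfl | huw
        · rw [Equiv.swap_self]; exact H.one_mem
        · have key : Equiv.swap v w * Equiv.swap u v * Equiv.swap v w = Equiv.swap w u :=
            Equiv.swap_mul_swap_mul_swap h.ne huw
          have : Equiv.swap w u ∈ H := by
            rw [← key]
            exact H.mul_mem (H.mul_mem ih (hmem _ _ h)) ih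
          rwa [Equiv.swap_comm] at this
  have hswaps : ∀ σ : Equiv.Perm (Fin n), σ.IsSwap → σ ∈ H := by
    rintro σ ⟨x, y, hxy, rfl⟩
    exact (hconn.preconnected x y).elim (fun w => hwalk x y w)
  have hH : ⊤ ≤ H := by
    rw [← Equiv.Perm.closure_isSwap, Subgroup.closure_le]
    exact fun σ hσ => hswaps σ hσ
  exact fun π => hH (Subgroup.mem_top π)

theorem stmt11 {n : ℕ} (hn : 2 ≤ n)
    -- symmetric nonnegative weights with zero diagonal and connected graph
    (a : Fin n → Fin n → ℝ) (ha_nonneg : ∀ j k, 0 ≤ a j k)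
    (ha_symm : ∀ j k, a j k = a k j) (ha_diag : ∀ j, a j j = 0)
    (ha_conn : (SimpleGraph.fromRel fun j k => 0 < a j k).Connected) :
    -- (i) ↔ (ii)
    (∀ X : QMat n,
      (∑ j, ∑ k, if j < k then a j k • (X - swapConj j k X) else 0) = 0 ↔
        ∀ (π : Equiv.Perm (Fin n)) (f g : Fin n → Fin 2), X (f ∘ π) (g ∘ π) = X f g) ∧
    -- (ii) ↔ (iii)
    (∀ X : QMat n,
      (∀ (π : Equiv.Perm (Fin n)) (f g : Fin n → Fin 2), X (f ∘ π) (g ∘ π) = X f g) ↔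
        permProj X = X) ∧
    -- `P*` is ℂ-linear
    (∀ X Y : QMat n, permProj (X + Y) = permProj X + permProj Y) ∧
    (∀ (c : ℂ) (X : QMat n), permProj (c • X) = c • permProj X) ∧
    -- `P*` is idempotent
    (∀ X : QMat n, permProj (permProj X) = permProj X) ∧
    -- `P*` is self-adjoint for the Frobenius inner product `⟨X,Y⟩ = tr(X†Y)`
    (∀ X Y : QMat n, ((permProj X)ᴴ * Y).trace = (Xᴴ * permProj Y).trace) ∧
    -- `P*` maps into the subspace of permutation-invariant matrices
    (∀ X : QMat n, ∀ (π : Equiv.Perm (Fin n)) (f g : Fin n → Fin 2),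
      permProj X (f ∘ π) (g ∘ π) = permProj X f g) := by
  refine ⟨?_, ?_, permProj_add, permProj_smul, permProj_idem, permProj_selfAdjoint,
    fun X => permProj_invariant X⟩
  · intro X
    constructor
    · intro hS
      have hkernel := kernel_swaps X a ha_nonneg hS
      refine invariant_of_swaps X _ ha_conn ?_
      intro j k hjk f g
      rw [SimpleGraph.fromRel_adj] at hjk
      obtain ⟨hne, hor⟩ := hjk
      have hpos : 0 < a j k := by
        rcases hor with h | h
        · exact h
        · rw [ha_symm]; exact h
      rcases hne.lt_or_gt with h | h
      · exact hkernel j k h hpos f g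
      · rw [Equiv.swap_comm j k]
        exact hkernel k j h (by rw [ha_symm] at hpos; exact hpos) f g
    · intro hinv
      refine Finset.sum_eq_zero fun j _ => Finset.sum_eq_zero fun k _ => ?_
      split
      · have hz : X - swapConj j k X = 0 := by
          ext f g
          have := hinv (Equiv.swap j k) f g
          simp only [Matrix.sub_apply, swapConj, Matrix.of_apply, Matrix.zero_apply]
          rw [this, sub_self]
        rw [hz, smul_zero]
      · rfl
  · intro X
    constructor
    · exact permProj_of_invariant X
    · intro h π f g
      rw [← h]
      exact permProj_invariant X π f g

end
end
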